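/- arXiv:1604.06135 — 8 statements merged into one kernel-verified Lean document; each statement's English description precedes it below -/
import Mathlib

section
/- Let F ⊆ P([n]) be an increasing family, 0 < p < 1, and let μ_p be the p-biased measure. If k ≤ n and p ≥ (k + sqrt(2n log(1/δ)))/n for some δ > 0, then μ_p(F) ≥ (1 − δ) · |F^{(k)}| / binom(n,k). -/
open Finset

noncomputable def biasedMeasure (p : ℝ) (n : ℕ) (F : Finset (Finset (Fin n))) : ℝ :=
  ∑ A ∈ F, p ^ A.card * (1 - p) ^ (n - A.card)

/-!
For an increasing family the level densities `|F^{(j)}| / binom(n, j)` are nondecreasing in `j`: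
double count the pairs `B ⊆ A` with `B ∈ F^{(k)}`, `A ∈ F^{(j)}`, using that every `j`-superset of
`B` lies in `F`. Hence `μ_p(F) ≥ P(Bin(n, p) ≥ k) · |F^{(k)}| / binom(n, k)`, and since
`np - k ≥ sqrt(2n log(1/δ))`, Chernoff's bound `P(Bin(n, p) < k) ≤ exp(-(np - k)² / 2n)` makes
the binomial factor at least `1 - δ`.
-/

theorem Real.exp_neg_le_one_sub_add_sq_div_two {x : ℝ} (hx : 0 ≤ x) :
    Real.exp (-x) ≤ 1 - x + x ^ 2 / 2 := by
  have hpos : 0 < 1 + x + x ^ 2 / 2 := by positivity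
  -- `(1 + x + x²/2) (1 - x + x²/2) = 1 + x⁴/4 ≥ 1`
  calc Real.exp (-x) = (Real.exp x)⁻¹ := Real.exp_neg x
    _ ≤ (1 + x + x ^ 2 / 2)⁻¹ := inv_anti₀ hpos (Real.quadratic_le_exp_of_nonneg hx)
    _ ≤ 1 - x + x ^ 2 / 2 := by
      rw [inv_le_iff_one_le_mul₀ hpos]
      nlinarith [pow_nonneg hx 4]

noncomputable def binomialMass (n : ℕ) (p : ℝ) (j : ℕ) : ℝ :=
  n.choose j * p ^ j * (1 - p) ^ (n - j)

section Binomial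

variable {n k : ℕ} {p : ℝ}

theorem binomialMass_nonneg (hp0 : 0 ≤ p) (hp1 : p ≤ 1) (j : ℕ) : 0 ≤ binomialMass n p j := by
  unfold binomialMass
  positivity

theorem sum_binomialMass_eq_one (n : ℕ) (p : ℝ) :
    ∑ j ∈ range (n + 1), binomialMass n p j = 1 := by
  simpa [binomialMass, mul_assoc, mul_comm, mul_left_comm] using (add_pow p (1 - p) n).symm

theorem sum_range_binomialMass_le_one (hp0 : 0 ≤ p) (hp1 : p ≤ 1) (hk : k ≤ n) :
    ∑ j ∈ range k, binomialMass n p j ≤ 1 := by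
  calc ∑ j ∈ range k, binomialMass n p j ≤ ∑ j ∈ range (n + 1), binomialMass n p j :=
        sum_le_sum_of_subset_of_nonneg (range_subset_range.2 (by omega))
          fun j _ _ => binomialMass_nonneg hp0 hp1 j
    _ = 1 := sum_binomialMass_eq_one n p

theorem sum_range_binomialMass_le_exp_mul_pow {l : ℝ} (hl : 0 ≤ l) (hp0 : 0 ≤ p) (hp1 : p ≤ 1)
    (hk : k ≤ n) :
    ∑ j ∈ range k, binomialMass n p j ≤ Real.exp (l * k) * (p * Real.exp (-l) + (1 - p)) ^ n := by
  have htilt : ∀ j ∈ range k, binomialMass n p j ≤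
      Real.exp (l * k) * (n.choose j * (p * Real.exp (-l)) ^ j * (1 - p) ^ (n - j)) := by
    intro j hj
    have hjk : (j : ℝ) ≤ k := by exact_mod_cast (mem_range.1 hj).le
    have hexp : 1 ≤ Real.exp (l * k) * Real.exp (-l) ^ j := by
      rw [← Real.exp_nat_mul, ← Real.exp_add, Real.one_le_exp_iff]
      nlinarith
    calc binomialMass n p j ≤ binomialMass n p j * (Real.exp (l * k) * Real.exp (-l) ^ j) :=
          le_mul_of_one_le_right (binomialMass_nonneg hp0 hp1 j) hexp
      _ = _ := by unfold binomialMass; ring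
  calc ∑ j ∈ range k, binomialMass n p j
      ≤ ∑ j ∈ range k, Real.exp (l * k) *
          (n.choose j * (p * Real.exp (-l)) ^ j * (1 - p) ^ (n - j)) := sum_le_sum htilt
    _ ≤ ∑ j ∈ range (n + 1), Real.exp (l * k) *
          (n.choose j * (p * Real.exp (-l)) ^ j * (1 - p) ^ (n - j)) :=
        sum_le_sum_of_subset_of_nonneg (range_subset_range.2 (by omega)) fun _ _ _ => by positivity
    _ = Real.exp (l * k) * (p * Real.exp (-l) + (1 - p)) ^ n := by
        rw [← mul_sum, add_pow]
        congr 1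
        exact sum_congr rfl fun j _ => by ring

theorem sum_range_binomialMass_le_exp_neg_sq {t : ℝ} (hn : 0 < n) (hp0 : 0 ≤ p) (hp1 : p ≤ 1)
    (ht : 0 ≤ t) (hkt : k + t ≤ n * p) :
    ∑ j ∈ range k, binomialMass n p j ≤ Real.exp (-t ^ 2 / (2 * n)) := by
  have hn' : (0 : ℝ) < n := by exact_mod_cast hn
  have hk : k ≤ n := by exact_mod_cast (show (k : ℝ) ≤ n by nlinarith)
  set l := t / n with hl
  have hl0 : 0 ≤ l := by positivity
  have hmgf : p * Real.exp (-l) + (1 - p) ≤ Real.exp (p * (-l + l ^ 2 / 2)) := by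
    have := Real.exp_neg_le_one_sub_add_sq_div_two hl0
    have := Real.add_one_le_exp (p * (-l + l ^ 2 / 2))
    nlinarith
  have hexponent : l * k + n * (p * (-l + l ^ 2 / 2)) ≤ -t ^ 2 / (2 * n) := by
    have : -t ^ 2 / (2 * n) = -(l * t) + n * l ^ 2 / 2 := by rw [hl]; field_simp; ring
    rw [this]
    nlinarith [mul_nonneg hl0 (show 0 ≤ n * p - (k + t) by linarith),
      mul_nonneg (mul_nonneg hn'.le (sq_nonneg l)) (show 0 ≤ 1 - p by linarith)]
  calc ∑ j ∈ range k, binomialMass n p j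
      ≤ Real.exp (l * k) * (p * Real.exp (-l) + (1 - p)) ^ n :=
        sum_range_binomialMass_le_exp_mul_pow hl0 hp0 hp1 hk
    _ ≤ Real.exp (l * k) * Real.exp (p * (-l + l ^ 2 / 2)) ^ n := by gcongr
    _ = Real.exp (l * k + n * (p * (-l + l ^ 2 / 2))) := by
        rw [← Real.exp_nat_mul, ← Real.exp_add]
    _ ≤ Real.exp (-t ^ 2 / (2 * n)) := Real.exp_le_exp.2 hexponent

theorem sum_range_binomialMass_le_of_add_sqrt_log_le {δ : ℝ} (hδ : 0 < δ) (hk : k ≤ n)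
    (hp : (k + Real.sqrt (2 * n * Real.log (1 / δ))) / n ≤ p) (hp1 : p ≤ 1) :
    ∑ j ∈ range k, binomialMass n p j ≤ δ := by
  have hp0 : 0 ≤ p := (div_nonneg (by positivity) (Nat.cast_nonneg n)).trans hp
  rcases le_or_gt 1 δ with hδ1 | hδ1
  · exact (sum_range_binomialMass_le_one hp0 hp1 hk).trans hδ1
  rcases k.eq_zero_or_pos with rfl | hk0
  · simpa using hδ.le
  have hn : (0 : ℝ) < n := by exact_mod_cast hk0.trans_le hk
  have hlog : 0 ≤ Real.log (1 / δ) := Real.log_nonneg (one_le_one_div hδ hδ1.le)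
  set t := Real.sqrt (2 * n * Real.log (1 / δ))
  have ht : t ^ 2 = 2 * n * Real.log (1 / δ) := Real.sq_sqrt (by positivity)
  have hδt : Real.exp (-t ^ 2 / (2 * n)) = δ := by
    rw [ht, show -(2 * n * Real.log (1 / δ)) / (2 * n) = Real.log δ by
      field_simp; rw [one_div, Real.log_inv, neg_neg]]
    exact Real.exp_log hδ
  rw [div_le_iff₀ hn] at hp
  exact hδt ▸ sum_range_binomialMass_le_exp_neg_sq (by exact_mod_cast hn) hp0 hp1
    (Real.sqrt_nonneg _) (by linarith)

end Binomial

namespace IsUpperSet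

variable {α : Type*} [Fintype α] [DecidableEq α] {𝒜 : Finset (Finset α)} {j k : ℕ}

theorem card_slice_mul_choose_le (h𝒜 : IsUpperSet (𝒜 : Set (Finset α))) (hkj : k ≤ j) :
    #(𝒜 # k) * (Fintype.card α - k).choose (j - k) ≤ #(𝒜 # j) * j.choose k := by
  refine card_mul_le_card_mul (· ⊆ ·) (fun B hB => ?_) (fun A hA => ?_)
  · obtain ⟨hB𝒜, hBk⟩ := mem_slice.1 hB
    have hinj : Set.InjOn (B ∪ ·) (powersetCard (j - k) Bᶜ : Set (Finset α)) := by
      intro C₁ hC₁ C₂ hC₂ h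
      rw [← union_sdiff_cancel_left (subset_compl_iff_disjoint_left.1 (mem_powersetCard.1 hC₁).1),
        ← union_sdiff_cancel_left (subset_compl_iff_disjoint_left.1 (mem_powersetCard.1 hC₂).1)]
      exact congrArg (· \ B) h
    have hsub : (powersetCard (j - k) Bᶜ).image (B ∪ ·) ⊆ bipartiteAbove (· ⊆ ·) (𝒜 # j) B := by
      simp only [subset_iff, mem_image, mem_powersetCard, mem_bipartiteAbove, mem_slice]
      rintro _ ⟨C, ⟨hCB, hCcard⟩, rfl⟩
      have hd : Disjoint B C := subset_compl_iff_disjoint_left.1 hCB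
      exact ⟨⟨h𝒜 subset_union_left hB𝒜, by rw [card_union_of_disjoint hd, hBk, hCcard]; omega⟩,
        subset_union_left⟩
    calc (Fintype.card α - k).choose (j - k) = #((powersetCard (j - k) Bᶜ).image (B ∪ ·)) := by
          rw [card_image_of_injOn hinj, card_powersetCard, card_compl, hBk]
      _ ≤ _ := card_le_card hsub
  · obtain ⟨-, hAj⟩ := mem_slice.1 hA
    calc #(bipartiteBelow (· ⊆ ·) (𝒜 # k) A) ≤ #(powersetCard k A) := by
          refine card_le_card fun B hB => ?_
          obtain ⟨hB, hBA⟩ := (mem_bipartiteBelow _).1 hB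
          exact mem_powersetCard.2 ⟨hBA, (mem_slice.1 hB).2⟩
      _ = j.choose k := by rw [card_powersetCard, hAj]

theorem card_slice_div_choose_le (h𝒜 : IsUpperSet (𝒜 : Set (Finset α))) (hkj : k ≤ j)
    (hj : j ≤ Fintype.card α) :
    (#(𝒜 # k) : ℝ) / (Fintype.card α).choose k ≤ #(𝒜 # j) / (Fintype.card α).choose j := by
  set N := Fintype.card α
  have hcross : #(𝒜 # k) * N.choose j ≤ #(𝒜 # j) * N.choose k := by
    refine Nat.le_of_mul_le_mul_right ?_ (Nat.choose_pos hkj)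
    calc #(𝒜 # k) * N.choose j * j.choose k
        = #(𝒜 # k) * (N - k).choose (j - k) * N.choose k := by
          rw [mul_assoc, Nat.choose_mul hkj]; ring
      _ ≤ #(𝒜 # j) * j.choose k * N.choose k :=
          Nat.mul_le_mul_right _ (h𝒜.card_slice_mul_choose_le hkj)
      _ = #(𝒜 # j) * N.choose k * j.choose k := by ring
  rw [div_le_div_iff₀ (by exact_mod_cast Nat.choose_pos (hkj.trans hj))
    (by exact_mod_cast Nat.choose_pos hj)]
  exact_mod_cast hcross

end IsUpperSet

theorem biasedMeasure_eq_sum_card_slice (p : ℝ) (n : ℕ) (F : Finset (Finset (Fin n))) :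
    biasedMeasure p n F = ∑ j ∈ range (n + 1), #(F # j) * (p ^ j * (1 - p) ^ (n - j)) := by
  rw [biasedMeasure, ← sum_fiberwise_of_maps_to (g := card) (t := range (n + 1))
    fun A _ => mem_range.2 (Nat.lt_succ_of_le (by simpa using A.card_le_univ))]
  refine sum_congr rfl fun j _ => ?_
  rw [sum_congr rfl fun A hA => by rw [(mem_filter.1 hA).2], sum_const, nsmul_eq_mul]
  rfl

section BiasedMeasure

variable {n k : ℕ} {p : ℝ} {F : Finset (Finset (Fin n))}

theorem IsUpperSet.one_sub_sum_binomialMass_mul_le_biasedMeasure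
    (hF : IsUpperSet (F : Set (Finset (Fin n)))) (hp0 : 0 ≤ p) (hp1 : p ≤ 1) (hk : k ≤ n) :
    (1 - ∑ j ∈ range k, binomialMass n p j) * (#(F # k) / n.choose k) ≤ biasedMeasure p n F := by
  have htail : 1 - ∑ j ∈ range k, binomialMass n p j = ∑ j ∈ Ico k (n + 1), binomialMass n p j := by
    rw [← sum_binomialMass_eq_one n p, ← sum_range_add_sum_Ico _ (by omega : k ≤ n + 1)]
    ring
  have hdensity : ∀ j ∈ Ico k (n + 1), (n.choose j : ℝ) * (#(F # k) / n.choose k) ≤ #(F # j) := by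
    intro j hj
    obtain ⟨hkj, hjn⟩ := mem_Ico.1 hj
    have h := hF.card_slice_div_choose_le hkj (by simpa using Nat.lt_succ_iff.1 hjn)
    rw [Fintype.card_fin, le_div_iff₀ (by exact_mod_cast Nat.choose_pos (by omega))] at h
    linarith
  rw [htail, sum_mul, biasedMeasure_eq_sum_card_slice]
  calc ∑ j ∈ Ico k (n + 1), binomialMass n p j * (#(F # k) / n.choose k)
      ≤ ∑ j ∈ Ico k (n + 1), #(F # j) * (p ^ j * (1 - p) ^ (n - j)) := by
        refine sum_le_sum fun j hj => ?_
        calc binomialMass n p j * (#(F # k) / n.choose k)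
            = (n.choose j * (#(F # k) / n.choose k)) * (p ^ j * (1 - p) ^ (n - j)) := by
              unfold binomialMass; ring
          _ ≤ _ := by gcongr; exact hdensity j hj
    _ ≤ ∑ j ∈ range (n + 1), #(F # j) * (p ^ j * (1 - p) ^ (n - j)) :=
        sum_le_sum_of_subset_of_nonneg (range_eq_Ico (n + 1) ▸ Ico_subset_Ico_left k.zero_le)
          fun _ _ _ => by positivity

end BiasedMeasure

/-- For an increasing family F and p ≥ (k + sqrt(2 n log(1/δ)))/n,
μ_p(F) ≥ (1 − δ)·|F^{(k)}|/binom(n,k). -/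
theorem monotone_approx (n k : ℕ) (δ p : ℝ) (hδ : 0 < δ) (hk : k ≤ n)
    (hp : ((k : ℝ) + Real.sqrt (2 * n * Real.log (1 / δ))) / n ≤ p) (hp1 : p ≤ 1)
    (F : Finset (Finset (Fin n)))
    (hinc : ∀ A B : Finset (Fin n), B ∈ F → B ⊆ A → A ∈ F) :
    (1 - δ) * (((F.filter (fun A => A.card = k)).card : ℝ) / (n.choose k)) ≤
      biasedMeasure p n F := by
  have hF : IsUpperSet (F : Set (Finset (Fin n))) := fun B A hBA hB => hinc A B hB hBA
  have hp0 : 0 ≤ p := (div_nonneg (by positivity) (Nat.cast_nonneg n)).trans hp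
  calc (1 - δ) * (#(F # k) / n.choose k)
      ≤ (1 - ∑ j ∈ range k, binomialMass n p j) * (#(F # k) / n.choose k) := by
        gcongr
        exact sum_range_binomialMass_le_of_add_sqrt_log_le hδ hk hp hp1
    _ ≤ biasedMeasure p n F := hF.one_sub_sum_binomialMass_mul_le_biasedMeasure hp0 hp1 hk
end

section
/- Let F ⊆ P([n]) be a t-intersecting, n-compressed family, and let A, B ∈ F with |A ∩ B| = t and n ∈ A ∩ B. Then A ∪ B = [n], and consequently |A| + |B| = n + t. -/
open Finset

/-- In a t-intersecting n-compressed family, two sets meeting in exactly t elements,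
both containing the maximal element, must cover the ground set; hence
|A| + |B| = n + t (ground set [n+1] here, with maximal element `Fin.last n`). -/
theorem compressed_exact_intersection (n t : ℕ) (F : Finset (Finset (Fin (n + 1))))
    (htint : ∀ A ∈ F, ∀ B ∈ F, t ≤ (A ∩ B).card)
    (hcomp : ∀ A ∈ F, Fin.last n ∈ A → ∀ j : Fin (n + 1), j ≠ Fin.last n → j ∉ A →
      insert j (A.erase (Fin.last n)) ∈ F)
    (A B : Finset (Fin (n + 1))) (hA : A ∈ F) (hB : B ∈ F)
    (hint : (A ∩ B).card = t) (hlast : Fin.last n ∈ A ∩ B) :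
    A ∪ B = Finset.univ ∧ A.card + B.card = (n + 1) + t := by
  rw [mem_inter] at hlast
  obtain ⟨hlA, hlB⟩ := hlast
  have hunion : A ∪ B = Finset.univ := by
    by_contra h
    obtain ⟨j, hj⟩ : ∃ j, j ∉ A ∪ B := by
      by_contra h'; push_neg at h'
      exact h (eq_univ_iff_forall.2 h')
    rw [mem_union] at hj
    push_neg at hj
    obtain ⟨hjA, hjB⟩ := hj
    have hjlast : j ≠ Fin.last n := fun e => hjA (e ▸ hlA)
    have hA' := hcomp A hA hlA j hjlast hjA
    have hle := htint _ hA' B hB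
    have heq : insert j (A.erase (Fin.last n)) ∩ B = (A ∩ B).erase (Fin.last n) := by
      ext x
      simp only [mem_inter, mem_insert, mem_erase]
      constructor
      · rintro ⟨(rfl | ⟨hx1, hx2⟩), hxB⟩
        · exact absurd hxB hjB
        · exact ⟨hx1, hx2, hxB⟩
      · rintro ⟨hx1, hx2, hxB⟩
        exact ⟨Or.inr ⟨hx1, hx2⟩, hxB⟩
    rw [heq, card_erase_of_mem (mem_inter.2 ⟨hlA, hlB⟩), hint] at hle
    have ht1 : 0 < t := hint ▸ card_pos.2 ⟨_, mem_inter.2 ⟨hlA, hlB⟩⟩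
    omega
  refine ⟨hunion, ?_⟩
  have hc := card_union_add_card_inter A B
  rw [hunion, hint, card_univ] at hc
  simpa using hc.symm
end

section
/- Let 0 < p ≤ 1/2 and let F, G ⊆ P([n]) be cross-intersecting families. Then μ_p(F) ≤ (1 − μ_p(G))^{log_{1−p} p}. -/
/-!
Split the cube at a coordinate `a`: with `𝒜₀` the members of `𝒜` avoiding `a` and `𝒜₁` those
containing it (with `a` removed), `μ(𝒜) = (1 - p) μ(𝒜₀) + p μ(𝒜₁)`, and the pairs `(𝒜₀, ℬ₀)`,
`(𝒜₀, ℬ₁)`, `(𝒜₁, ℬ₀)` are again cross-intersecting. By induction on the ground set, with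
`u = 1 - μ(ℬ₀)` and `v = 1 - μ(ℬ₁)`, the bound reduces (when `v ≤ u`; otherwise monotonicity of
`t ↦ t^c` suffices) to the two-point inequality `p u^c + (1 - p) v^c ≤ ((1 - p) u + p v)^c`
for `c = log_{1-p} p`, which is characterised by `(1 - p)^c = p` and satisfies `c ≥ 1`
since `p ≤ 1/2`.
-/

open Finset

open Real

theorem one_le_logb_one_sub {p : ℝ} (hp : 0 < p) (hp2 : p ≤ 1 / 2) : 1 ≤ logb (1 - p) p :=
  (le_logb_iff_rpow_le_of_base_lt_one (by linarith) (by linarith) hp).2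
    (by rw [rpow_one]; linarith)

/-- Writing `m = (1 - p) u + p v` and `t = v / m ∈ [0, 1]`, we have
`(1 - p) u = t (1 - p) m + (1 - t) m`, so convexity of `x ↦ x^c` and `(1 - p)^c = p` give
`p u^c ≤ t p m^c + (1 - t) m^c`, while `(1 - p) v^c ≤ (1 - p) t m^c` because `t^c ≤ t`. -/
theorem mul_rpow_add_one_sub_mul_rpow_le {p c u v : ℝ} (hp : 0 < p) (hp1 : p < 1) (hc : 1 ≤ c)
    (hpc : (1 - p) ^ c = p) (hv : 0 ≤ v) (hvu : v ≤ u) :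
    p * u ^ c + (1 - p) * v ^ c ≤ ((1 - p) * u + p * v) ^ c := by
  have hq : 0 < 1 - p := by linarith
  rcases (hv.trans hvu).eq_or_lt with rfl | hu
  · obtain rfl : v = 0 := le_antisymm hvu hv
    simp [zero_rpow (by linarith : c ≠ 0)]
  set m := (1 - p) * u + p * v
  have hm : 0 < m := by positivity
  set t := v / m
  have ht0 : 0 ≤ t := by positivity
  have ht1 : t ≤ 1 := (div_le_one hm).2 (by nlinarith)
  have hconv : ((1 - p) * u) ^ c ≤ t * p * m ^ c + (1 - t) * m ^ c := by
    have h := (convexOn_rpow hc).2 (Set.mem_Ici.2 (mul_pos hq hm).le) (Set.mem_Ici.2 hm.le)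
      ht0 (sub_nonneg.2 ht1) (add_sub_cancel t 1)
    have hsplit : t * ((1 - p) * m) + (1 - t) * m = (1 - p) * u := by
      simp only [t]
      field_simp
      ring
    simp only [smul_eq_mul, hsplit, mul_rpow hq.le hm.le, hpc] at h
    linarith
  have hvc : v ^ c ≤ t * m ^ c :=
    calc v ^ c = t ^ c * m ^ c := by rw [← mul_rpow ht0 hm.le, div_mul_cancel₀ _ hm.ne']
      _ ≤ t * m ^ c := by gcongr; exact rpow_le_self_of_le_one ht0 ht1 hc
  calc p * u ^ c + (1 - p) * v ^ c = ((1 - p) * u) ^ c + (1 - p) * v ^ c := by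
        rw [mul_rpow hq.le hu.le, hpc]
    _ ≤ (t * p * m ^ c + (1 - t) * m ^ c) + (1 - p) * (t * m ^ c) := by gcongr
    _ = m ^ c := by ring

variable {α : Type*} [DecidableEq α]

noncomputable def biasedMeasureOn (p : ℝ) (s : Finset α) (𝒜 : Finset (Finset α)) : ℝ :=
  ∑ A ∈ 𝒜, p ^ #A * (1 - p) ^ #(s \ A)

section BiasedMeasure

variable {p : ℝ} {s : Finset α} {𝒜 : Finset (Finset α)} {a : α}

theorem biasedMeasure_eq_biasedMeasureOn_univ (n : ℕ) (F : Finset (Finset (Fin n))) :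
    biasedMeasure p n F = biasedMeasureOn p univ F :=
  sum_congr rfl fun A _ => by rw [card_univ_sdiff, Fintype.card_fin]

@[simp]
theorem biasedMeasureOn_empty : biasedMeasureOn p s ∅ = 0 :=
  sum_empty

theorem biasedMeasureOn_powerset : biasedMeasureOn p s s.powerset = 1 := by
  calc biasedMeasureOn p s s.powerset = ∑ A ∈ s.powerset, p ^ #A * (1 - p) ^ (#s - #A) :=
        sum_congr rfl fun A hA => by rw [card_sdiff_of_subset (mem_powerset.1 hA)]
    _ = 1 := by rw [sum_pow_mul_eq_add_pow, add_sub_cancel, one_pow]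

theorem biasedMeasureOn_le_one (hp0 : 0 ≤ p) (hp1 : p ≤ 1) (h𝒜 : 𝒜 ⊆ s.powerset) :
    biasedMeasureOn p s 𝒜 ≤ 1 :=
  biasedMeasureOn_powerset (p := p) (s := s) ▸ sum_le_sum_of_subset_of_nonneg h𝒜
    fun _ _ _ => mul_nonneg (pow_nonneg hp0 _) (pow_nonneg (sub_nonneg.2 hp1) _)

theorem biasedMeasureOn_insert (ha : a ∉ s) (𝒜 : Finset (Finset α)) :
    biasedMeasureOn p (insert a s) 𝒜 =
      (1 - p) * biasedMeasureOn p s (𝒜.nonMemberSubfamily a) +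
        p * biasedMeasureOn p s (𝒜.memberSubfamily a) := by
  have hinj : Set.InjOn (insert a) (𝒜.memberSubfamily a : Set (Finset α)) :=
    insert_erase_invOn.2.injOn.mono fun A hA => (mem_memberSubfamily.1 hA).2
  rw [biasedMeasureOn, ← sum_filter_not_add_sum_filter 𝒜 (a ∈ ·),
    ← image_insert_memberSubfamily, sum_image hinj, biasedMeasureOn, biasedMeasureOn,
    mul_sum, mul_sum]
  congr 1
  · refine sum_congr rfl fun A hA => ?_
    have haA : a ∉ A := (mem_filter.1 hA).2
    rw [insert_sdiff_of_notMem _ haA, card_insert_of_notMem fun h => ha (mem_sdiff.1 h).1,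
      pow_succ]
    ring
  · refine sum_congr rfl fun A hA => ?_
    rw [insert_sdiff_insert, sdiff_insert_of_notMem ha,
      card_insert_of_notMem (mem_memberSubfamily.1 hA).2, pow_succ]
    ring

theorem nonMemberSubfamily_subset_powerset (h𝒜 : 𝒜 ⊆ (insert a s).powerset) :
    𝒜.nonMemberSubfamily a ⊆ s.powerset := fun A hA => by
  rw [mem_nonMemberSubfamily] at hA
  exact mem_powerset.2 ((subset_insert_iff_of_notMem hA.2).1 (mem_powerset.1 (h𝒜 hA.1)))

theorem memberSubfamily_subset_powerset (h𝒜 : 𝒜 ⊆ (insert a s).powerset) :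
    𝒜.memberSubfamily a ⊆ s.powerset := fun A hA => by
  rw [mem_memberSubfamily] at hA
  exact mem_powerset.2 ((insert_subset_insert_iff hA.2).1 (mem_powerset.1 (h𝒜 hA.1)))

end BiasedMeasure

def CrossIntersecting (𝒜 ℬ : Finset (Finset α)) : Prop :=
  ∀ A ∈ 𝒜, ∀ B ∈ ℬ, (A ∩ B).Nonempty

namespace CrossIntersecting

variable {𝒜 ℬ : Finset (Finset α)} {a : α}

theorem symm (h : CrossIntersecting 𝒜 ℬ) : CrossIntersecting ℬ 𝒜 :=
  fun B hB A hA => inter_comm A B ▸ h A hA B hB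

theorem nonMemberSubfamily (h : CrossIntersecting 𝒜 ℬ) :
    CrossIntersecting (𝒜.nonMemberSubfamily a) (ℬ.nonMemberSubfamily a) :=
  fun A hA B hB => h A (mem_filter.1 hA).1 B (mem_filter.1 hB).1

theorem nonMemberSubfamily_memberSubfamily (h : CrossIntersecting 𝒜 ℬ) :
    CrossIntersecting (𝒜.nonMemberSubfamily a) (ℬ.memberSubfamily a) := by
  intro A hA B hB
  rw [mem_nonMemberSubfamily] at hA
  rw [mem_memberSubfamily] at hB
  obtain ⟨x, hx⟩ := h A hA.1 _ hB.1
  rw [mem_inter, mem_insert] at hx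
  obtain ⟨hxA, rfl | hxB⟩ := hx
  · exact absurd hxA hA.2
  · exact ⟨x, mem_inter.2 ⟨hxA, hxB⟩⟩

theorem memberSubfamily_nonMemberSubfamily (h : CrossIntersecting 𝒜 ℬ) :
    CrossIntersecting (𝒜.memberSubfamily a) (ℬ.nonMemberSubfamily a) :=
  h.symm.nonMemberSubfamily_memberSubfamily.symm

theorem biasedMeasureOn_le_one_sub_rpow {p c : ℝ} (hp : 0 < p) (hp1 : p < 1) (hc : 1 ≤ c)
    (hpc : (1 - p) ^ c = p) {s : Finset α} (h𝒜 : 𝒜 ⊆ s.powerset) (hℬ : ℬ ⊆ s.powerset)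
    (h : CrossIntersecting 𝒜 ℬ) :
    biasedMeasureOn p s 𝒜 ≤ (1 - biasedMeasureOn p s ℬ) ^ c := by
  have hq : 0 ≤ 1 - p := by linarith
  induction s using Finset.induction generalizing 𝒜 ℬ with
  | empty =>
    rcases 𝒜.eq_empty_or_nonempty with rfl | ⟨A, hA⟩
    · simpa using rpow_nonneg (sub_nonneg.2 (biasedMeasureOn_le_one hp.le hp1.le hℬ)) c
    · obtain rfl : ℬ = ∅ := eq_empty_of_forall_notMem fun B hB => by
        obtain ⟨x, hx⟩ := h A hA B hB
        exact notMem_empty x (mem_powerset.1 (h𝒜 hA) (mem_inter.1 hx).1)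
      simpa using biasedMeasureOn_le_one hp.le hp1.le h𝒜
  | insert a s ha ih =>
    have h₀₀ := ih (nonMemberSubfamily_subset_powerset h𝒜)
      (nonMemberSubfamily_subset_powerset hℬ) h.nonMemberSubfamily
    have h₀₁ := ih (nonMemberSubfamily_subset_powerset h𝒜)
      (memberSubfamily_subset_powerset hℬ) h.nonMemberSubfamily_memberSubfamily
    have h₁₀ := ih (memberSubfamily_subset_powerset h𝒜)
      (nonMemberSubfamily_subset_powerset hℬ) h.memberSubfamily_nonMemberSubfamily
    have hu := sub_nonneg.2
      (biasedMeasureOn_le_one hp.le hp1.le (nonMemberSubfamily_subset_powerset hℬ))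
    have hv := sub_nonneg.2
      (biasedMeasureOn_le_one hp.le hp1.le (memberSubfamily_subset_powerset hℬ))
    rw [biasedMeasureOn_insert ha, biasedMeasureOn_insert ha]
    set x₀ := biasedMeasureOn p s (𝒜.nonMemberSubfamily a)
    set x₁ := biasedMeasureOn p s (𝒜.memberSubfamily a)
    set y₀ := biasedMeasureOn p s (ℬ.nonMemberSubfamily a)
    set y₁ := biasedMeasureOn p s (ℬ.memberSubfamily a)
    rw [show 1 - ((1 - p) * y₀ + p * y₁) = (1 - p) * (1 - y₀) + p * (1 - y₁) by ring]
    generalize 1 - y₀ = u at *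
    generalize 1 - y₁ = v at *
    rcases le_total u v with huv | hvu
    · calc (1 - p) * x₀ + p * x₁ ≤ (1 - p) * u ^ c + p * u ^ c := by gcongr
        _ = u ^ c := by ring
        _ ≤ ((1 - p) * u + p * v) ^ c := by
          gcongr
          nlinarith
    · calc (1 - p) * x₀ + p * x₁ ≤ p * u ^ c + (1 - p) * v ^ c := by
            linarith [mul_le_mul_of_nonneg_left h₀₁ hq, mul_le_mul_of_nonneg_left h₁₀ hp.le]
        _ ≤ ((1 - p) * u + p * v) ^ c :=
          mul_rpow_add_one_sub_mul_rpow_le hp hp1 hc hpc hv hvu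

end CrossIntersecting

/-- For cross-intersecting families F, G and 0 < p ≤ 1/2,
μ_p(F) ≤ (1 − μ_p(G))^{log_{1−p} p}. -/
theorem cross_intersecting_biased_bound (n : ℕ) (p : ℝ) (hp : 0 < p) (hp2 : p ≤ 1 / 2)
    (F G : Finset (Finset (Fin n)))
    (hcross : ∀ A ∈ F, ∀ B ∈ G, (A ∩ B).Nonempty) :
    biasedMeasure p n F ≤
      (1 - biasedMeasure p n G) ^ (Real.log p / Real.log (1 - p)) := by
  have hp1 : p < 1 := by linarith
  have hcube : ∀ 𝒜 : Finset (Finset (Fin n)), 𝒜 ⊆ univ.powerset :=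
    fun _ A _ => mem_powerset.2 (subset_univ A)
  rw [biasedMeasure_eq_biasedMeasureOn_univ, biasedMeasure_eq_biasedMeasureOn_univ, log_div_log]
  exact CrossIntersecting.biasedMeasureOn_le_one_sub_rpow hp hp1 (one_le_logb_one_sub hp hp2)
    (rpow_logb (by linarith) (by linarith) hp) (hcube F) (hcube G) hcross
end

section
/- Let F ⊆ P([n]) be an increasing family and 0 < p < 1. Then p · I^p(F) ≥ μ_p(F) · log_p(μ_p(F)), where I^p(F) is the total influence of F with respect to μ_p. -/
open Finset
open scoped Classical

/-- The set of i-influential elements of F. -/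
noncomputable def influentialSet (n : ℕ) (F : Finset (Finset (Fin n))) (i : Fin n) :
    Finset (Finset (Fin n)) :=
  Finset.univ.filter (fun S => Xor' (S ∈ F) (symmDiff S {i} ∈ F))

/-!
Induction on `n`. A family `F` on `Fin (n + 1)` splits by the last point into the families
`F₀ = {T | T ∈ F}` and `F₁ = {T | T ∪ {last} ∈ F}` on `Fin n`, and `F₀ ⊆ F₁` when `F` is
increasing. Then `μ(F) = (1 - p) μ(F₀) + p μ(F₁)`, the influences of the other coordinates split
in the same way, and the last coordinate has influence `μ(F₁) - μ(F₀)`. Combining the induction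
hypotheses for `F₀` and `F₁` leaves a two-point inequality for `x ↦ x log x`, which follows from
the concavity of `log`.
-/

open Real

section TwoPoint

variable {p a b : ℝ}

lemma mul_log_le_mul_log_of_le {m : ℝ} (ha : 0 ≤ a) (ham : a ≤ m) :
    a * log a ≤ a * log m := by
  rcases ha.eq_or_lt with rfl | ha
  · simp
  · exact mul_le_mul_of_nonneg_left (log_le_log ha ham) ha.le

lemma sub_mul_log_add_mul_log_le (hp : 0 < p) (ha : 0 ≤ a) (hab : a ≤ b) :
    (b - a) * log p + b * log b ≤ b * log ((1 - p) * a + p * b) := by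
  rcases (ha.trans hab).eq_or_lt with rfl | hb
  · obtain rfl : a = 0 := le_antisymm hab ha
    simp
  -- `(1 - p) a + p b` is the convex combination of `b` and `p b` with weights `a / b`, `1 - a / b`
  have hconc := strictConcaveOn_log_Ioi.concaveOn.2 (Set.mem_Ioi.2 hb)
    (Set.mem_Ioi.2 (mul_pos hp hb)) (div_nonneg ha hb.le) (div_nonneg (sub_nonneg.2 hab) hb.le)
    (by field_simp; ring)
  have hm : a / b * b + (b - a) / b * (p * b) = (1 - p) * a + p * b := by
    field_simp; ring
  simp only [smul_eq_mul] at hconc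
  rw [hm, log_mul hp.ne' hb.ne'] at hconc
  calc (b - a) * log p + b * log b = b * (a / b * log b + (b - a) / b * (log p + log b)) := by
        field_simp; ring
    _ ≤ b * log ((1 - p) * a + p * b) := mul_le_mul_of_nonneg_left hconc hb.le

lemma two_point_mul_log_le (hp : 0 < p) (hp1 : p ≤ 1) (ha : 0 ≤ a) (hab : a ≤ b) :
    (1 - p) * (a * log a) + p * (b * log b) + p * (b - a) * log p ≤
      ((1 - p) * a + p * b) * log ((1 - p) * a + p * b) := by
  have h₀ := mul_log_le_mul_log_of_le ha (show a ≤ (1 - p) * a + p * b by nlinarith)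
  have h₁ := sub_mul_log_add_mul_log_le hp ha hab
  linear_combination (1 - p) * h₀ + p * h₁

end TwoPoint

section BiasedMeasure

variable {p : ℝ} {n : ℕ}

lemma biasedMeasure_nonneg (hp : 0 ≤ p) (hp1 : p ≤ 1) (F : Finset (Finset (Fin n))) :
    0 ≤ biasedMeasure p n F :=
  sum_nonneg fun _ _ => mul_nonneg (pow_nonneg hp _) (pow_nonneg (sub_nonneg.2 hp1) _)

lemma biasedMeasure_mono (hp : 0 ≤ p) (hp1 : p ≤ 1) {F G : Finset (Finset (Fin n))}
    (h : F ⊆ G) : biasedMeasure p n F ≤ biasedMeasure p n G :=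
  sum_le_sum_of_subset_of_nonneg h fun _ _ _ =>
    mul_nonneg (pow_nonneg hp _) (pow_nonneg (sub_nonneg.2 hp1) _)

lemma biasedMeasure_sdiff {F G : Finset (Finset (Fin n))} (h : G ⊆ F) :
    biasedMeasure p n (F \ G) = biasedMeasure p n F - biasedMeasure p n G :=
  sum_sdiff_eq_sub h

lemma biasedMeasure_eq_sum_ite (F : Finset (Finset (Fin n))) :
    biasedMeasure p n F =
      ∑ S, if S ∈ F then p ^ S.card * (1 - p) ^ (n - S.card) else 0 := by
  rw [sum_ite_mem, univ_inter, biasedMeasure]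

lemma mem_influentialSet {F : Finset (Finset (Fin n))} {i : Fin n} {S : Finset (Fin n)} :
    S ∈ influentialSet n F i ↔ Xor (S ∈ F) (symmDiff S {i} ∈ F) := by
  simp only [influentialSet, mem_filter, mem_univ, true_and]
  rfl

end BiasedMeasure

section Slices

variable {n : ℕ}

lemma last_notMem_image_castSucc (T : Finset (Fin n)) : Fin.last n ∉ T.image Fin.castSucc := by
  simp [Fin.castSucc_ne_last]

lemma sum_finset_fin_succ {M : Type*} [AddCommMonoid M] (f : Finset (Fin (n + 1)) → M) :
    ∑ S, f S = ∑ T : Finset (Fin n), f (T.image Fin.castSucc) +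
      ∑ T : Finset (Fin n), f (insert (Fin.last n) (T.image Fin.castSucc)) := by
  have hinj : Set.InjOn (image Fin.castSucc) ((univ : Finset (Fin n)).powerset : Set _) :=
    (image_injective (Fin.castSucc_injective n)).injOn
  have huniv : (univ : Finset (Fin (n + 1))) = insert (Fin.last n) (univ.image Fin.castSucc) := by
    simp [Fin.image_castSucc]
  rw [← powerset_univ, huniv,
    sum_powerset_insert (last_notMem_image_castSucc _), powerset_image,
    sum_image hinj, sum_image hinj, powerset_univ]

lemma image_castSucc_symmDiff (T : Finset (Fin n)) (j : Fin n) :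
    symmDiff (T.image Fin.castSucc) {j.castSucc} = (symmDiff T {j}).image Fin.castSucc := by
  rw [image_symmDiff _ _ (Fin.castSucc_injective n), image_singleton]

lemma insert_last_symmDiff_castSucc (T : Finset (Fin n)) (j : Fin n) :
    symmDiff (insert (Fin.last n) (T.image Fin.castSucc)) {j.castSucc} =
      insert (Fin.last n) ((symmDiff T {j}).image Fin.castSucc) := by
  ext x
  induction x using Fin.lastCases <;>
    simp [mem_symmDiff, Fin.castSucc_ne_last, (Fin.castSucc_ne_last j).symm]

lemma image_castSucc_symmDiff_last (T : Finset (Fin n)) :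
    symmDiff (T.image Fin.castSucc) {Fin.last n} = insert (Fin.last n) (T.image Fin.castSucc) := by
  ext x
  induction x using Fin.lastCases <;> simp [mem_symmDiff, Fin.castSucc_ne_last]

lemma insert_last_symmDiff_last (T : Finset (Fin n)) :
    symmDiff (insert (Fin.last n) (T.image Fin.castSucc)) {Fin.last n} = T.image Fin.castSucc := by
  ext x
  induction x using Fin.lastCases <;> simp [mem_symmDiff, Fin.castSucc_ne_last]

def lowerSlice (F : Finset (Finset (Fin (n + 1)))) : Finset (Finset (Fin n)) :=
  {T | T.image Fin.castSucc ∈ F}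

def upperSlice (F : Finset (Finset (Fin (n + 1)))) : Finset (Finset (Fin n)) :=
  {T | insert (Fin.last n) (T.image Fin.castSucc) ∈ F}

variable {F : Finset (Finset (Fin (n + 1)))} {T : Finset (Fin n)}

@[simp]
lemma mem_lowerSlice : T ∈ lowerSlice F ↔ T.image Fin.castSucc ∈ F := by
  simp [lowerSlice]

@[simp]
lemma mem_upperSlice : T ∈ upperSlice F ↔ insert (Fin.last n) (T.image Fin.castSucc) ∈ F := by
  simp [upperSlice]

lemma biasedMeasure_succ (p : ℝ) (F : Finset (Finset (Fin (n + 1)))) :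
    biasedMeasure p (n + 1) F =
      (1 - p) * biasedMeasure p n (lowerSlice F) + p * biasedMeasure p n (upperSlice F) := by
  simp only [biasedMeasure_eq_sum_ite, sum_finset_fin_succ, mul_sum, mem_lowerSlice,
    mem_upperSlice, card_insert_of_notMem (last_notMem_image_castSucc _),
    card_image_of_injective _ (Fin.castSucc_injective n), mul_ite, mul_zero]
  congr 1 <;> refine sum_congr rfl fun T _ => if_congr Iff.rfl ?_ rfl
  · have : n + 1 - T.card = n - T.card + 1 := by
      have := T.card_le_univ.trans_eq (Fintype.card_fin n); omega
    rw [this]; ring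
  · rw [Nat.add_sub_add_right]; ring

lemma lowerSlice_influentialSet_castSucc (j : Fin n) :
    lowerSlice (influentialSet (n + 1) F j.castSucc) = influentialSet n (lowerSlice F) j := by
  ext T
  simp [mem_influentialSet, image_castSucc_symmDiff]

lemma upperSlice_influentialSet_castSucc (j : Fin n) :
    upperSlice (influentialSet (n + 1) F j.castSucc) = influentialSet n (upperSlice F) j := by
  ext T
  simp [mem_influentialSet, insert_last_symmDiff_castSucc]

lemma lowerSlice_influentialSet_last (h : lowerSlice F ⊆ upperSlice F) :
    lowerSlice (influentialSet (n + 1) F (Fin.last n)) = upperSlice F \ lowerSlice F := by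
  ext T
  have hT := @h T
  rw [mem_lowerSlice, mem_upperSlice] at hT
  simp only [mem_lowerSlice, mem_upperSlice, mem_sdiff, mem_influentialSet,
    image_castSucc_symmDiff_last, xor_def]
  tauto

lemma upperSlice_influentialSet_last (h : lowerSlice F ⊆ upperSlice F) :
    upperSlice (influentialSet (n + 1) F (Fin.last n)) = upperSlice F \ lowerSlice F := by
  ext T
  have hT := @h T
  rw [mem_lowerSlice, mem_upperSlice] at hT
  simp only [mem_lowerSlice, mem_upperSlice, mem_sdiff, mem_influentialSet,
    insert_last_symmDiff_last, xor_def]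
  tauto

lemma isUpperSet_lowerSlice (hF : IsUpperSet (F : Set (Finset (Fin (n + 1))))) :
    IsUpperSet (lowerSlice F : Set (Finset (Fin n))) := fun _ _ hAB hA => by
  rw [mem_coe, mem_lowerSlice] at hA ⊢
  exact hF (image_subset_image hAB) hA

lemma isUpperSet_upperSlice (hF : IsUpperSet (F : Set (Finset (Fin (n + 1))))) :
    IsUpperSet (upperSlice F : Set (Finset (Fin n))) := fun _ _ hAB hA => by
  rw [mem_coe, mem_upperSlice] at hA ⊢
  exact hF (insert_subset_insert _ (image_subset_image hAB)) hA

lemma lowerSlice_subset_upperSlice (hF : IsUpperSet (F : Set (Finset (Fin (n + 1))))) :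
    lowerSlice F ⊆ upperSlice F := fun _ hT => by
  rw [mem_lowerSlice] at hT
  rw [mem_upperSlice]
  exact hF (subset_insert _ _) hT

end Slices

noncomputable def totalInfluence (p : ℝ) (n : ℕ) (F : Finset (Finset (Fin n))) : ℝ :=
  ∑ i, biasedMeasure p n (influentialSet n F i)

lemma totalInfluence_succ (p : ℝ) {n : ℕ} {F : Finset (Finset (Fin (n + 1)))}
    (h : lowerSlice F ⊆ upperSlice F) :
    totalInfluence p (n + 1) F =
      (1 - p) * totalInfluence p n (lowerSlice F) + p * totalInfluence p n (upperSlice F) +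
        (biasedMeasure p n (upperSlice F) - biasedMeasure p n (lowerSlice F)) := by
  have hlast : biasedMeasure p (n + 1) (influentialSet (n + 1) F (Fin.last n)) =
      biasedMeasure p n (upperSlice F) - biasedMeasure p n (lowerSlice F) := by
    rw [biasedMeasure_succ, lowerSlice_influentialSet_last h, upperSlice_influentialSet_last h,
      biasedMeasure_sdiff h]
    ring
  rw [totalInfluence, Fin.sum_univ_castSucc, hlast]
  simp only [totalInfluence, biasedMeasure_succ,
    lowerSlice_influentialSet_castSucc, upperSlice_influentialSet_castSucc, sum_add_distrib,
    mul_sum]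

theorem mul_totalInfluence_mul_log_le {p : ℝ} (hp : 0 < p) (hp1 : p ≤ 1) {n : ℕ}
    (F : Finset (Finset (Fin n))) (hF : IsUpperSet (F : Set (Finset (Fin n)))) :
    p * totalInfluence p n F * log p ≤ biasedMeasure p n F * log (biasedMeasure p n F) := by
  induction n with
  | zero =>
    simp only [totalInfluence, univ_eq_empty, sum_empty, mul_zero, zero_mul]
    simp only [biasedMeasure, eq_empty_of_isEmpty, card_empty, pow_zero, tsub_self, mul_one,
      sum_const, nsmul_eq_mul]
    positivity
  | succ n ih =>
    have hsub := lowerSlice_subset_upperSlice hF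
    have ih₀ := ih _ (isUpperSet_lowerSlice hF)
    have ih₁ := ih _ (isUpperSet_upperSlice hF)
    have htwo := two_point_mul_log_le hp hp1 (biasedMeasure_nonneg hp.le hp1 _)
      (biasedMeasure_mono hp.le hp1 hsub)
    rw [totalInfluence_succ p hsub, biasedMeasure_succ]
    linear_combination (1 - p) * ih₀ + p * ih₁ + htwo

/-- Isoperimetric inequality: p·I^p(F) ≥ μ_p(F)·log_p(μ_p(F)) for increasing F. -/
theorem biased_isoperimetric (n : ℕ) (p : ℝ) (hp : 0 < p) (hp1 : p < 1)
    (F : Finset (Finset (Fin n)))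
    (hinc : ∀ A B : Finset (Fin n), B ∈ F → B ⊆ A → A ∈ F) :
    biasedMeasure p n F * (Real.log (biasedMeasure p n F) / Real.log p) ≤
      p * ∑ i : Fin n, biasedMeasure p n (influentialSet n F i) := by
  have hF : IsUpperSet (F : Set (Finset (Fin n))) := fun A B hAB hA => hinc B A hA hAB
  rw [← mul_div_assoc, div_le_iff_of_neg (log_neg hp hp1)]
  exact mul_totalInfluence_mul_log_le hp hp1.le F hF
end

section
/- For any η > 0 and C ≥ 0 there exists c₀ = c₀(η, C) ∈ ℕ such that: for all n, l, k, d ≥ 0 with n ≥ (1+η)l + k + c₀ and l ≥ k + c₀ − 1, if A ⊆ binom([n],l) and B ⊆ binom([n],k) are cross-intersecting and |A| ≤ binom(n,l) − binom(n−d,l), then |A| + C|B| ≤ binom(n,l) − binom(n−d,l) + C·binom(n−d, k−d). -/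
/-!
Pass from `B` to the family `ℱ` of complements of its members, all of size `m = n - k`. Since `A`
and `B` are cross-intersecting, `A` avoids the `(m - l)`-th shadow of `ℱ`, so it suffices to show
`C(q, l) + C (|ℱ| - C(q, m)) ≤ |∂^(m-l) ℱ|` for `q = n - d` (if `|ℱ| ≤ C(n - d, m)`, the bound
on `|A|` alone suffices).

By Kruskal–Katona we may replace `ℱ` by an initial segment of colex. If
`C(p, m) ≤ |ℱ| ≤ C(p + 1, m)`, such a segment consists of all `m`-subsets of `[p]` together with
`|ℱ| - C(p, m)` sets containing `p`; the shadow of the former has size `C(p, l)`, and by iterated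
LYM the shadow of the latter is at least `C` times as large as it. Lowering `q` from `p` to `n - d`
changes the left-hand side by `C C(q, m - 1) - C(q, l - 1) ≤ 0` at each step: here
`C(q, m - 1) = C(q, a)` with `a ≤ k + 1`, the coefficients `C(q, j)` grow by a factor at least
`1 + η` at each step from `j = a` to `j = a + N`, where `(1 + η)^N ≥ C`, and
`C(q, a + N) ≤ C(q, l - 1)` by unimodality.
-/

open Finset Finset.Colex
open scoped FinsetFamily

namespace Nat

theorem choose_le_choose_of_le_of_two_mul_le {p i j : ℕ} (hij : i ≤ j) (hj : 2 * j ≤ p) :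
    p.choose i ≤ p.choose j := by
  induction j, hij using Nat.le_induction with
  | base => rfl
  | succ j hij ih =>
    exact (ih (by omega)).trans (choose_le_succ_of_lt_half_left (by omega))

theorem choose_le_choose_of_le_of_add_le {p i j : ℕ} (hij : i ≤ j) (hp : i + j ≤ p) :
    p.choose i ≤ p.choose j := by
  rcases le_or_gt (2 * j) p with hj | hj
  · exact choose_le_choose_of_le_of_two_mul_le hij hj
  · rw [← choose_symm (by omega : j ≤ p)]
    exact choose_le_choose_of_le_of_two_mul_le (by omega) (by omega)

theorem mul_choose_le_choose_succ {r : ℝ} {p j : ℕ} (h : r * (j + 1) ≤ p - j) :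
    r * p.choose j ≤ p.choose (j + 1) := by
  have hpascal : (p.choose (j + 1) : ℝ) * (j + 1) = p.choose j * (p - j : ℕ) := by
    exact_mod_cast choose_succ_right_eq p j
  have hsub : (p : ℝ) - j ≤ (p - j : ℕ) := by
    rcases le_total j p with hjp | hpj
    · rw [Nat.cast_sub hjp]
    · have : (p : ℝ) ≤ j := by exact_mod_cast hpj
      linarith [(p - j : ℕ).cast_nonneg (α := ℝ)]
  have hc : (0 : ℝ) ≤ p.choose j := (p.choose j).cast_nonneg
  nlinarith [mul_le_mul_of_nonneg_left h hc, mul_le_mul_of_nonneg_left hsub hc]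

theorem pow_mul_choose_le_choose_add {r : ℝ} (hr : 0 ≤ r) {p a s : ℕ}
    (h : (r + 1) * (a + s) ≤ p) : r ^ s * p.choose a ≤ p.choose (a + s) := by
  induction s with
  | zero => simp
  | succ s ih =>
    push_cast at h
    calc r ^ (s + 1) * p.choose a = r * (r ^ s * p.choose a) := by ring
      _ ≤ r * p.choose (a + s) := mul_le_mul_of_nonneg_left (ih (by nlinarith)) hr
      _ ≤ p.choose (a + s + 1) := mul_choose_le_choose_succ (by push_cast; nlinarith)

theorem mul_choose_le_choose_of_le_pow {r C : ℝ} (hr : 0 ≤ r) {N p a j : ℕ} (hC : C ≤ r ^ N)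
    (haj : a + N ≤ j) (hgrowth : (r + 1) * (a + N) ≤ p) (hp : a + N + j ≤ p) :
    C * p.choose a ≤ p.choose j :=
  calc C * p.choose a ≤ r ^ N * p.choose a := by gcongr
    _ ≤ p.choose (a + N) := pow_mul_choose_le_choose_add hr (by exact_mod_cast hgrowth)
    _ ≤ p.choose j := by exact_mod_cast choose_le_choose_of_le_of_add_le haj hp

theorem choose_sub_sub_eq_ite {n k d : ℕ} (hkn : k < n) :
    (n - d).choose (n - k) = if d ≤ k then (n - d).choose (k - d) else 0 := by
  split_ifs with hdk
  · rw [← choose_symm (by omega : k - d ≤ n - d), show n - d - (k - d) = n - k by omega]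
  · exact choose_eq_zero_of_lt (by omega)

end Nat

theorem choose_add_mul_sub_choose_le_succ {C b : ℝ} {q l m : ℕ} (hl : 1 ≤ l) (hm : 1 ≤ m)
    (hw : C * q.choose (m - 1) ≤ q.choose (l - 1)) :
    q.choose l + C * (b - q.choose m) ≤ (q + 1).choose l + C * (b - (q + 1).choose m) := by
  obtain ⟨l, rfl⟩ := Nat.exists_eq_add_of_le' hl
  obtain ⟨m, rfl⟩ := Nat.exists_eq_add_of_le' hm
  simp only [Nat.add_sub_cancel] at hw
  rw [Nat.choose_succ_succ' q l, Nat.choose_succ_succ' q m]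
  push_cast
  linarith

namespace Finset

section MemberSubfamily

variable {α : Type*} [DecidableEq α]

theorem shadow_nonMemberSubfamily_subset (a : α) (𝒜 : Finset (Finset α)) :
    ∂ (𝒜.nonMemberSubfamily a) ⊆ (∂ 𝒜).nonMemberSubfamily a := by
  intro t ht
  obtain ⟨s, hs, x, hx, rfl⟩ := mem_shadow_iff.1 ht
  rw [mem_nonMemberSubfamily] at hs ⊢
  exact ⟨erase_mem_shadow hs.1 hx, fun h => hs.2 (mem_of_mem_erase h)⟩

theorem shadow_memberSubfamily_subset (a : α) (𝒜 : Finset (Finset α)) :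
    ∂ (𝒜.memberSubfamily a) ⊆ (∂ 𝒜).memberSubfamily a := by
  intro t ht
  obtain ⟨s, hs, x, hx, rfl⟩ := mem_shadow_iff.1 ht
  rw [mem_memberSubfamily] at hs ⊢
  have hax : a ≠ x := by rintro rfl; exact hs.2 hx
  refine ⟨?_, fun h => hs.2 (mem_of_mem_erase h)⟩
  rw [← erase_insert_of_ne hax]
  exact erase_mem_shadow hs.1 (mem_insert_of_mem hx)

theorem shadow_iterate_nonMemberSubfamily_subset (a : α) (𝒜 : Finset (Finset α)) (k : ℕ) :
    ∂^[k] (𝒜.nonMemberSubfamily a) ⊆ (∂^[k] 𝒜).nonMemberSubfamily a := by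
  induction k with
  | zero => exact Subset.rfl
  | succ k ih =>
    simp only [Function.iterate_succ_apply']
    exact (shadow_mono ih).trans (shadow_nonMemberSubfamily_subset a _)

theorem shadow_iterate_memberSubfamily_subset (a : α) (𝒜 : Finset (Finset α)) (k : ℕ) :
    ∂^[k] (𝒜.memberSubfamily a) ⊆ (∂^[k] 𝒜).memberSubfamily a := by
  induction k with
  | zero => exact Subset.rfl
  | succ k ih =>
    simp only [Function.iterate_succ_apply']
    exact (shadow_mono ih).trans (shadow_memberSubfamily_subset a _)

theorem card_shadow_iterate_nonMemberSubfamily_add_card_shadow_iterate_memberSubfamily_le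
    (a : α) (𝒜 : Finset (Finset α)) (k : ℕ) :
    #(∂^[k] (𝒜.nonMemberSubfamily a)) + #(∂^[k] (𝒜.memberSubfamily a)) ≤ #(∂^[k] 𝒜) := by
  rw [← card_memberSubfamily_add_card_nonMemberSubfamily a (∂^[k] 𝒜), add_comm]
  exact add_le_add (card_le_card (shadow_iterate_memberSubfamily_subset a 𝒜 k))
    (card_le_card (shadow_iterate_nonMemberSubfamily_subset a 𝒜 k))

theorem _root_.Set.Sized.memberSubfamily {𝒜 : Finset (Finset α)} {r : ℕ}
    (h𝒜 : (𝒜 : Set (Finset α)).Sized r) (a : α) :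
    (𝒜.memberSubfamily a : Set (Finset α)).Sized (r - 1) := by
  intro s hs
  rw [mem_coe, mem_memberSubfamily] at hs
  have := h𝒜 hs.1
  rw [card_insert_of_notMem hs.2] at this
  omega

end MemberSubfamily

section InitSeg

variable {α : Type*} [LinearOrder α]

theorem isInitSeg_powersetCard {P : Finset α} (hP : IsLowerSet (P : Set α)) (r : ℕ) :
    IsInitSeg (powersetCard r P) r := by
  refine ⟨Set.sized_powersetCard P r, fun s t hs ht => ?_⟩
  rw [mem_powersetCard] at hs ⊢
  refine ⟨fun x hx => ?_, ht.2⟩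
  by_contra hxP
  obtain ⟨y, hys, -, hxy⟩ := toColex_le_toColex.1 ht.1.le hx (fun h => hxP (hs.1 h))
  exact hxP (hP hxy (hs.1 hys))

theorem exists_isInitSeg_card_eq [Fintype α] {r b : ℕ} (hb : b ≤ (Fintype.card α).choose r) :
    ∃ 𝒞 : Finset (Finset α), IsInitSeg 𝒞 r ∧ #𝒞 = b := by
  induction b with
  | zero => exact ⟨∅, isInitSeg_empty, card_empty⟩
  | succ b ih =>
    obtain ⟨𝒞, h𝒞, rfl⟩ := ih (by omega)
    have hne : (powersetCard r univ \ 𝒞).Nonempty := by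
      rw [← card_pos, card_sdiff_of_subset h𝒞.1.subset_powersetCard_univ, card_powersetCard,
        card_univ]
      omega
    obtain ⟨s, hs, hmin⟩ := exists_min_image _ toColex hne
    rw [mem_sdiff, mem_powersetCard_univ] at hs
    refine ⟨insert s 𝒞, ⟨?_, fun u t hu ht => ?_⟩, card_insert_of_notMem hs.2⟩
    · intro t ht
      rcases mem_insert.1 ht with rfl | ht
      · exact hs.1
      · exact h𝒞.1 ht
    · rcases mem_insert.1 hu with rfl | hu
      · refine mem_insert_of_mem (not_not.1 fun htC => ?_)
        exact (hmin t (mem_sdiff.2 ⟨mem_powersetCard_univ.2 ht.2, htC⟩)).not_gt ht.1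
      · exact mem_insert_of_mem (h𝒞.2 hu ht)

theorem IsInitSeg.nonMemberSubfamily_eq_powersetCard_Iio [LocallyFiniteOrderBot α]
    {𝒞 : Finset (Finset α)} {r : ℕ} {a : α} (h𝒞 : IsInitSeg 𝒞 r)
    (hlo : (#(Iio a)).choose r ≤ #𝒞) (hhi : #𝒞 ≤ (#(Iic a)).choose r) :
    𝒞.nonMemberSubfamily a = powersetCard r (Iio a) := by
  have hIio : IsInitSeg (powersetCard r (Iio a)) r :=
    isInitSeg_powersetCard (by simpa using isLowerSet_Iio a) r
  have hIic : IsInitSeg (powersetCard r (Iic a)) r :=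
    isInitSeg_powersetCard (by simpa using isLowerSet_Iic a) r
  have hlow : powersetCard r (Iio a) ⊆ 𝒞 := by
    rcases hIio.total h𝒞 with h | h
    · exact h
    · exact (eq_of_subset_of_card_le h (by rwa [card_powersetCard])).ge
  have hup : 𝒞 ⊆ powersetCard r (Iic a) := by
    rcases h𝒞.total hIic with h | h
    · exact h
    · exact (eq_of_subset_of_card_le h (by rwa [card_powersetCard])).ge
  ext s
  rw [mem_nonMemberSubfamily]
  constructor
  · rintro ⟨hs, has⟩
    obtain ⟨hsa, hsr⟩ := mem_powersetCard.1 (hup hs)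
    refine mem_powersetCard.2 ⟨fun x hx => mem_Iio.2 ((mem_Iic.1 (hsa hx)).lt_of_ne ?_), hsr⟩
    rintro rfl
    exact has hx
  · intro hs
    exact ⟨hlow hs, fun ha => notMem_Iio_self ((mem_powersetCard.1 hs).1 ha)⟩

end InitSeg

section Shadow

variable {α : Type*} [DecidableEq α] [Fintype α] {𝒜 : Finset (Finset α)} {r i : ℕ}

theorem card_div_choose_le_card_shadow_iterate_div_choose (h𝒜 : (𝒜 : Set (Finset α)).Sized r)
    (hi : i ≤ r) :
    (#𝒜 : ℝ) / (Fintype.card α).choose r ≤ #(∂^[i] 𝒜) / (Fintype.card α).choose (r - i) := by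
  induction i with
  | zero => simp
  | succ i ih =>
    rw [Function.iterate_succ_apply', ← Nat.sub_sub]
    exact (ih (by omega)).trans
      (local_lubell_yamamoto_meshalkin_inequality_div (by omega) h𝒜.shadow_iterate)

theorem mul_card_le_card_shadow_iterate {C : ℝ} (h𝒜 : (𝒜 : Set (Finset α)).Sized r) (hi : i ≤ r)
    (hr : r ≤ Fintype.card α)
    (hC : C * (Fintype.card α).choose r ≤ (Fintype.card α).choose (r - i)) :
    C * #𝒜 ≤ #(∂^[i] 𝒜) := by
  have hpos : (0 : ℝ) < (Fintype.card α).choose r := by exact_mod_cast Nat.choose_pos hr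
  have hpos' : (0 : ℝ) < (Fintype.card α).choose (r - i) := by
    exact_mod_cast Nat.choose_pos (by omega)
  have hlym := card_div_choose_le_card_shadow_iterate_div_choose h𝒜 hi
  rw [div_le_div_iff₀ hpos hpos'] at hlym
  refine le_of_mul_le_mul_right ?_ hpos
  calc C * #𝒜 * (Fintype.card α).choose r = #𝒜 * (C * (Fintype.card α).choose r) := by ring
    _ ≤ #𝒜 * (Fintype.card α).choose (r - i) := by gcongr
    _ ≤ #(∂^[i] 𝒜) * (Fintype.card α).choose r := hlym

theorem card_add_card_shadow_iterate_compls_le {𝒜 ℬ : Finset (Finset α)} {l k : ℕ}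
    (h𝒜 : (𝒜 : Set (Finset α)).Sized l) (hℬ : (ℬ : Set (Finset α)).Sized k)
    (hlk : l + k ≤ Fintype.card α) (h𝒜ℬ : ∀ s ∈ 𝒜, ∀ t ∈ ℬ, (s ∩ t).Nonempty) :
    #𝒜 + #(∂^[Fintype.card α - k - l] ℬᶜˢ) ≤ (Fintype.card α).choose l := by
  have hdisj : Disjoint 𝒜 (∂^[Fintype.card α - k - l] ℬᶜˢ) := by
    refine disjoint_left.2 fun s hs hsh => ?_
    obtain ⟨u, hu, hsu, -⟩ := mem_shadow_iterate_iff_exists_sdiff.1 hsh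
    obtain ⟨x, hx⟩ := h𝒜ℬ s hs uᶜ (mem_compls.1 hu)
    exact mem_compl.1 (mem_inter.1 hx).2 (hsu (mem_inter.1 hx).1)
  have hsized :
      ((∂^[Fintype.card α - k - l] ℬᶜˢ : Finset (Finset α)) : Set (Finset α)).Sized l := by
    simpa [show Fintype.card α - k - (Fintype.card α - k - l) = l by omega] using
      hℬ.compls.shadow_iterate (k := Fintype.card α - k - l)
  rw [← card_union_of_disjoint hdisj]
  exact Set.Sized.card_le (by simpa [Set.sized_union] using ⟨h𝒜, hsized⟩)

end Shadow

section KruskalKatona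

variable {n m l : ℕ} {C : ℝ} {ℱ : Finset (Finset (Fin n))}

theorem choose_add_mul_le_card_shadow_iterate_of_le_choose_succ
    (hℱ : (ℱ : Set (Finset (Fin n))).Sized m) (hl : 1 ≤ l) (hlm : l ≤ m) {p : ℕ} (hmp : m ≤ p)
    (hpn : p < n) (hlo : p.choose m ≤ #ℱ) (hhi : #ℱ ≤ (p + 1).choose m)
    (hw : C * n.choose (m - 1) ≤ n.choose (l - 1)) :
    p.choose l + C * (#ℱ - p.choose m) ≤ #(∂^[m - l] ℱ) := by
  obtain ⟨𝒞, h𝒞, h𝒞card⟩ := exists_isInitSeg_card_eq (α := Fin n) (r := m) (b := #ℱ)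
    (by simpa using hℱ.card_le)
  set e : Fin n := ⟨p, hpn⟩
  have hnon : 𝒞.nonMemberSubfamily e = powersetCard m (Iio e) :=
    IsInitSeg.nonMemberSubfamily_eq_powersetCard_Iio h𝒞 (by simpa [e, h𝒞card] using hlo)
      (by simpa [e, h𝒞card] using hhi)
  have hmem_card : (#(𝒞.memberSubfamily e) : ℝ) = #ℱ - p.choose m := by
    have := card_memberSubfamily_add_card_nonMemberSubfamily e 𝒞
    rw [hnon, card_powersetCard, Fin.card_Iio, h𝒞card] at this
    rw [← this]
    push_cast
    ring
  have hnon_shadow : (p.choose l : ℝ) ≤ #(∂^[m - l] (𝒞.nonMemberSubfamily e)) := by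
    have := kruskal_katona_lovasz_form (i := m - l) (𝒜 := 𝒞.nonMemberSubfamily e) (by omega) hmp
      hpn.le (hnon ▸ Set.sized_powersetCard _ _) (by rw [hnon, card_powersetCard, Fin.card_Iio])
    rw [Nat.sub_sub_self hlm] at this
    exact_mod_cast this
  have hmem_shadow : C * #(𝒞.memberSubfamily e) ≤ #(∂^[m - l] (𝒞.memberSubfamily e)) :=
    mul_card_le_card_shadow_iterate (h𝒞.1.memberSubfamily e) (by omega) (by simp; omega)
      (by simpa [show m - 1 - (m - l) = l - 1 by omega] using hw)
  calc p.choose l + C * (#ℱ - p.choose m : ℝ)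
      ≤ #(∂^[m - l] (𝒞.nonMemberSubfamily e)) + #(∂^[m - l] (𝒞.memberSubfamily e)) := by
        rw [← hmem_card]
        exact add_le_add hnon_shadow hmem_shadow
    _ ≤ #(∂^[m - l] 𝒞) := by
        exact_mod_cast
          card_shadow_iterate_nonMemberSubfamily_add_card_shadow_iterate_memberSubfamily_le e 𝒞 _
    _ ≤ #(∂^[m - l] ℱ) := by exact_mod_cast iterated_kk hℱ h𝒞card.le h𝒞

theorem choose_add_mul_le_card_shadow_iterate (hℱ : (ℱ : Set (Finset (Fin n))).Sized m)
    (hℱ₀ : ℱ.Nonempty) (hl : 1 ≤ l) (hlm : l ≤ m) (hmn : m ≤ n)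
    (hw : ∀ q ≤ n, C * q.choose (m - 1) ≤ q.choose (l - 1)) {q : ℕ} (hqn : q ≤ n)
    (hq : q.choose m ≤ #ℱ) :
    q.choose l + C * (#ℱ - q.choose m) ≤ #(∂^[m - l] ℱ) := by
  induction hqn using Nat.decreasingInduction with
  | self =>
    have hmax : #ℱ = n.choose m := le_antisymm (by simpa using hℱ.card_le) hq
    have := kruskal_katona_lovasz_form (i := m - l) (by omega) hmn le_rfl hℱ hq
    rw [Nat.sub_sub_self hlm] at this
    rw [hmax, sub_self, mul_zero, add_zero]
    exact_mod_cast this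
  | of_succ q hqn ih =>
    by_cases hnext : (q + 1).choose m ≤ #ℱ
    · exact (choose_add_mul_sub_choose_le_succ hl (by omega) (hw q hqn.le)).trans (ih hnext)
    · rw [not_le] at hnext
      have hmq : m ≤ q := by
        by_contra! hqm
        have : (q + 1).choose m ≤ 1 := by
          rcases (show q + 1 ≤ m by omega).lt_or_eq with h | h
          · rw [Nat.choose_eq_zero_of_lt h]; omega
          · rw [h, Nat.choose_self]
        have := card_pos.2 hℱ₀
        omega
      exact choose_add_mul_le_card_shadow_iterate_of_le_choose_succ hℱ hl hlm hmq hqn hq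
        hnext.le (hw n le_rfl)

end KruskalKatona

end Finset

theorem mul_choose_sub_sub_one_le_choose_sub_one {η C : ℝ} (hη : 0 ≤ η) {N n l k q : ℕ}
    (hC : C ≤ (1 + η) ^ N) (hn : (1 + η) * l + k + (N + 3) ≤ (n : ℝ)) (hkl : k + (N + 3) ≤ l + 1)
    (hqn : q ≤ n) : C * q.choose (n - k - 1) ≤ q.choose (l - 1) := by
  rcases lt_or_ge q (n - k - 1) with hq | hq
  · simp [Nat.choose_eq_zero_of_lt hq]
  have hl : (l : ℝ) ≤ (1 + η) * l := by nlinarith [l.cast_nonneg (α := ℝ)]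
  have hnat : l + k + (N + 3) ≤ n := by exact_mod_cast (show ((l + k + (N + 3) : ℕ) : ℝ) ≤ n by
    push_cast; linarith)
  set a := q - (n - k - 1)
  have hqa : (q : ℝ) + k + 1 = n + a := by exact_mod_cast (show q + k + 1 = n + a by omega)
  have haN : ((a + N : ℕ) : ℝ) ≤ l := by exact_mod_cast (show a + N ≤ l by omega)
  rw [← Nat.choose_symm hq]
  refine Nat.mul_choose_le_choose_of_le_pow (by linarith) hC (by omega) ?_ (by omega)
  push_cast at haN ⊢
  nlinarith [mul_le_mul_of_nonneg_left haN (by linarith : (0 : ℝ) ≤ 1 + η)]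

/-- For any η > 0 and C ≥ 0 there exists c₀ such that for cross-intersecting A, B
with n ≥ (1+η)l + k + c₀, l ≥ k + c₀ − 1 and |A| ≤ binom(n,l) − binom(n−d,l),
we have |A| + C|B| ≤ binom(n,l) − binom(n−d,l) + C·binom(n−d,k−d)
(where binom(n−d,k−d) is interpreted as 0 when k < d). -/
theorem cross_intersecting_weighted_bound (η C : ℝ) (hη : 0 < η) (hC : 0 ≤ C) :
    ∃ c₀ : ℕ, ∀ (n l k d : ℕ) (A B : Finset (Finset (Fin n))),
      (1 + η) * l + k + c₀ ≤ (n : ℝ) → k + c₀ ≤ l + 1 →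
      (∀ S ∈ A, S.card = l) → (∀ S ∈ B, S.card = k) →
      (∀ S ∈ A, ∀ T ∈ B, (S ∩ T).Nonempty) →
      A.card ≤ n.choose l - (n - d).choose l →
      (A.card : ℝ) + C * B.card ≤
        (n.choose l : ℝ) - (n - d).choose l +
          C * (if d ≤ k then ((n - d).choose (k - d) : ℝ) else 0) := by
  obtain ⟨N, hN⟩ := pow_unbounded_of_one_lt C (by linarith : (1 : ℝ) < 1 + η)
  refine ⟨N + 3, fun n l k d A B hn hkl hA hB hAB hAcard => ?_⟩
  push_cast at hn
  have hnat : l + k + (N + 3) ≤ n := by exact_mod_cast (show ((l + k + (N + 3) : ℕ) : ℝ) ≤ n by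
    push_cast; nlinarith [l.cast_nonneg (α := ℝ)])
  rw [← Nat.cast_zero, ← Nat.cast_ite, ← Nat.choose_sub_sub_eq_ite (by omega)]
  rcases le_or_gt #B ((n - d).choose (n - k)) with hBsmall | hBlarge
  · have hA' : (#A : ℝ) ≤ n.choose l - (n - d).choose l := by
      rw [← Nat.cast_sub (Nat.choose_le_choose l (n.sub_le d))]
      exact_mod_cast hAcard
    have hB' : C * #B ≤ C * (n - d).choose (n - k) := by gcongr
    linarith
  · have hshadow : (#A : ℝ) + #(∂^[n - k - l] Bᶜˢ) ≤ n.choose l := by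
      exact_mod_cast Fintype.card_fin n ▸
        card_add_card_shadow_iterate_compls_le (α := Fin n) hA hB (by simp; omega) hAB
    have hkk := choose_add_mul_le_card_shadow_iterate (ℱ := Bᶜˢ)
      (by simpa using Set.Sized.compls (𝒜 := B) hB) (by rw [← card_pos, card_compls]; omega)
      (by omega) (by omega) (n.sub_le k)
      (fun q hq => mul_choose_sub_sub_one_le_choose_sub_one hη.le hN.le hn hkl hq) (n.sub_le d)
      (by rw [card_compls]; omega)
    rw [card_compls] at hkk
    linarith
end

section
/- Let Ω be a finite probability space, X : Ω → ℝ≥0 a nonnegative random variable, f(x) = x log x (with f(0)=0), and β ∈ (0,1). Then E[f(X)] ≥ f(E[X]) + (1 − β + f(β)) · Pr[X ≤ β·E[X]] · E[X]. -/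
open Finset
open scoped Classical

lemma tangent_xlogx (x μ : ℝ) (hx : 0 ≤ x) (hμ : 0 < μ) :
    μ * Real.log μ + (1 + Real.log μ) * (x - μ) ≤ x * Real.log x := by
  rcases eq_or_lt_of_le hx with h | hx'
  · simp only [← h]
    nlinarith [Real.log_le_sub_one_of_pos hμ]
  · have h1 := Real.log_le_sub_one_of_pos (div_pos hμ hx')
    rw [Real.log_div hμ.ne' hx'.ne'] at h1
    have h2 : x * (Real.log μ - Real.log x) ≤ μ - x := by
      have h3 := mul_le_mul_of_nonneg_left h1 hx'.le
      have h4 : x * (μ / x - 1) = μ - x := by field_simp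
      nlinarith
    nlinarith

lemma pointwise_bound (x S β : ℝ) (hx : 0 ≤ x) (hS : 0 < S) (hβ : 0 < β) (hβ1 : β < 1) :
    S * Real.log S + (1 + Real.log S) * (x - S) +
      (if x ≤ β * S then (1 - β + β * Real.log β) * S else 0) ≤ x * Real.log x := by
  split_ifs with h
  · have ht := tangent_xlogx x (β * S) hx (mul_pos hβ hS)
    rw [Real.log_mul hβ.ne' hS.ne'] at ht
    have hlogβ : Real.log β < 0 := Real.log_neg hβ hβ1
    have hnn : 0 ≤ Real.log β * (x - β * S) := by nlinarith
    nlinarith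
  · have := tangent_xlogx x S hx hS
    linarith

/-- Stability version of Jensen's inequality for x ↦ x log x (Fox's lemma):
E[f(X)] ≥ f(E[X]) + (1 − β + f(β))·Pr[X ≤ β·E[X]]·E[X]. -/
theorem jensen_stability_xlogx (Ω : Type) [Fintype Ω] (w : Ω → ℝ)
    (hw : ∀ ω, 0 ≤ w ω) (hw1 : ∑ ω, w ω = 1)
    (X : Ω → ℝ) (hX : ∀ ω, 0 ≤ X ω) (β : ℝ) (hβ : 0 < β) (hβ1 : β < 1) :
    (∑ ω, w ω * X ω) * Real.log (∑ ω, w ω * X ω) +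
        (1 - β + β * Real.log β) *
          (∑ ω ∈ Finset.univ.filter (fun ω => X ω ≤ β * ∑ ω', w ω' * X ω'), w ω) *
          (∑ ω, w ω * X ω) ≤
      ∑ ω, w ω * (X ω * Real.log (X ω)) := by
  set S := ∑ ω, w ω * X ω with hSdef
  have hS0 : 0 ≤ S := Finset.sum_nonneg fun ω _ => mul_nonneg (hw ω) (hX ω)
  rcases eq_or_lt_of_le hS0 with hS | hS
  · have hz : ∀ ω ∈ Finset.univ, w ω * X ω = 0 := by
      rw [← Finset.sum_eq_zero_iff_of_nonneg fun ω _ => mul_nonneg (hw ω) (hX ω)]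
      exact hS.symm
    have hRHS : ∑ ω, w ω * (X ω * Real.log (X ω)) = 0 := by
      apply Finset.sum_eq_zero
      intro ω hω
      rcases mul_eq_zero.mp (hz ω hω) with h | h <;> simp [h]
    rw [hRHS, ← hS]
    simp
  · have key : ∀ ω ∈ Finset.univ,
        w ω * (S * Real.log S + (1 + Real.log S) * (X ω - S) +
          (if X ω ≤ β * S then (1 - β + β * Real.log β) * S else 0)) ≤
        w ω * (X ω * Real.log (X ω)) := by
      intro ω _
      exact mul_le_mul_of_nonneg_left (pointwise_bound (X ω) S β (hX ω) hS hβ hβ1) (hw ω)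
    have hsum := Finset.sum_le_sum key
    have expand : ∑ ω, w ω * (S * Real.log S + (1 + Real.log S) * (X ω - S) +
          (if X ω ≤ β * S then (1 - β + β * Real.log β) * S else 0)) =
        S * Real.log S +
          (1 - β + β * Real.log β) *
            (∑ ω ∈ Finset.univ.filter (fun ω => X ω ≤ β * S), w ω) * S := by
      simp only [mul_add]
      rw [Finset.sum_add_distrib, Finset.sum_add_distrib]
      have e1 : ∑ ω, w ω * (S * Real.log S) = S * Real.log S := by
        rw [← Finset.sum_mul, hw1, one_mul]
      have e2 : ∑ ω, w ω * ((1 + Real.log S) * (X ω - S)) = 0 := by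
        have : ∀ ω ∈ Finset.univ, w ω * ((1 + Real.log S) * (X ω - S)) =
            (1 + Real.log S) * (w ω * X ω) - ((1 + Real.log S) * S) * w ω := by
          intro ω _; ring
        rw [Finset.sum_congr rfl this, Finset.sum_sub_distrib, ← Finset.mul_sum,
          ← Finset.mul_sum, hw1, ← hSdef]
        ring
      have e3 : ∑ ω, w ω * (if X ω ≤ β * S then (1 - β + β * Real.log β) * S else 0) =
          (1 - β + β * Real.log β) *
            (∑ ω ∈ Finset.univ.filter (fun ω => X ω ≤ β * S), w ω) * S := by
        simp only [mul_ite, mul_zero]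
        rw [← Finset.sum_filter, ← Finset.sum_mul]
        ring
      rw [e1, e2, e3, add_zero]
    rw [← expand]
    exact hsum
end

section
/- For each λ, δ ∈ (0,1) and C > 0, there exists η = η(λ,δ,C) > 0 such that: if Ω is a finite probability space with Pr(ω) ≥ λ for every ω ∈ Ω, and X : Ω → ℝ≥0 satisfies E[X] ≤ C and E[X log X] < E[X]·log(E[X]) + η (with 0 log 0 = 0), then |X(ω) − E[X]| < δ for every ω ∈ Ω. One may take η = min{λδ²/(2C), λ³δ²/(2(1−λ)²C)}. -/
open Finset Real

/-!
The Jensen gap `E[X log X] - μ log μ` of `x ↦ x log x` is the mean of its Bregman divergence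
`D(X, μ)`, and since `(x log x)'' = 1/x ≥ 1/M` on `(0, M]`, `D(a, μ) ≥ (a - μ)² / (2M)`.
Atoms of mass at least `λ` force `X ≤ C/λ =: M`, and a single atom `ω` already contributes
`λ (X ω - μ)² / (2M)` to the gap; with `η = λ²δ²/(2C)` this gives `|X ω - μ| < δ`.
-/

theorem sub_div_le_log_sub_log {a b M : ℝ} (hb : 0 < b) (hba : b ≤ a) (haM : a ≤ M) :
    (a - b) / M ≤ log a - log b := by
  have ha : 0 < a := hb.trans_le hba
  calc (a - b) / M ≤ (a - b) / a := div_le_div_of_nonneg_left (by linarith) ha haM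
    _ = 1 - (a / b)⁻¹ := by field_simp
    _ ≤ log (a / b) := one_sub_inv_le_log_of_pos (div_pos ha hb)
    _ = log a - log b := log_div ha.ne' hb.ne'

/-- The Bregman divergence of `x ↦ x log x` at `b`, evaluated at `a`. -/
noncomputable def bregmanMulLog (b a : ℝ) : ℝ := a * log a - b * log b - (log b + 1) * (a - b)

theorem sq_sub_div_le_bregmanMulLog {a b M : ℝ} (ha : 0 ≤ a) (hb : 0 < b) (haM : a ≤ M)
    (hbM : b ≤ M) : (a - b) ^ 2 / (2 * M) ≤ bregmanMulLog b a := by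
  set g : ℝ → ℝ := fun x ↦ bregmanMulLog b x - (x - b) ^ 2 / (2 * M)
  set g' : ℝ → ℝ := fun x ↦ log x - log b - (x - b) / M
  have hg_cont : Continuous g := by
    unfold g bregmanMulLog; fun_prop
  have hg_deriv : ∀ x, 0 < x → HasDerivAt g (g' x) x := by
    intro x hx
    have := ((((hasDerivAt_mul_log hx.ne').sub_const (b * log b)).sub
      (((hasDerivAt_id x).sub_const b).const_mul (log b + 1))).sub
      ((((hasDerivAt_id x).sub_const b).pow 2).div_const (2 * M)))
    refine this.congr_deriv ?_
    simp only [id, mul_one, Nat.cast_ofNat]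
    ring
  have hg_b : g b = 0 := by simp [g, bregmanMulLog]
  -- `g'` has the sign of `x - b`, because `log` has slope at least `1/M` on `(0, M]`.
  have hb_le : g b ≤ g a := by
    rcases le_total a b with hab | hba
    · refine antitoneOn_of_hasDerivWithinAt_nonpos (f' := g') (convex_Icc 0 b) hg_cont.continuousOn
        (fun x hx ↦ ?_) (fun x hx ↦ ?_) ⟨ha, hab⟩ ⟨hb.le, le_rfl⟩ hab
      all_goals rw [interior_Icc] at hx
      · exact (hg_deriv x hx.1).hasDerivWithinAt
      · have hneg : (b - x) / M = -((x - b) / M) := by ring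
        linarith [sub_div_le_log_sub_log hx.1 hx.2.le hbM]
    · refine monotoneOn_of_hasDerivWithinAt_nonneg (f' := g') (convex_Icc b M) hg_cont.continuousOn
        (fun x hx ↦ ?_) (fun x hx ↦ ?_) ⟨le_rfl, hbM⟩ ⟨hba, haM⟩ hba
      all_goals rw [interior_Icc] at hx
      · exact (hg_deriv x (hb.trans hx.1)).hasDerivWithinAt
      · linarith [sub_div_le_log_sub_log hb hx.1.le hx.2.le]
  simpa [g, hg_b] using hb_le

theorem sum_mul_bregmanMulLog_mean {ι : Type*} [Fintype ι] {w X : ι → ℝ}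
    (hw : ∑ i, w i = 1) :
    ∑ i, w i * bregmanMulLog (∑ j, w j * X j) (X i) =
      ∑ i, w i * (X i * log (X i)) - (∑ j, w j * X j) * log (∑ j, w j * X j) := by
  set μ := ∑ j, w j * X j
  simp only [bregmanMulLog, mul_sub, sum_sub_distrib, ← sum_mul, hw, one_mul]
  rw [show ∑ i, w i * ((log μ + 1) * X i) = (log μ + 1) * μ by
    simp only [mul_left_comm (w _), ← mul_sum, μ]]
  ring

theorem mul_sq_sub_mean_div_le_jensen_gap {ι : Type*} [Fintype ι] {w X : ι → ℝ} {lam M : ℝ}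
    (hw0 : ∀ i, 0 ≤ w i) (hw : ∑ i, w i = 1) (hX0 : ∀ i, 0 ≤ X i) (hXM : ∀ i, X i ≤ M)
    (hμ : 0 < ∑ j, w j * X j) (i : ι) (hlam : lam ≤ w i) :
    lam * ((X i - ∑ j, w j * X j) ^ 2 / (2 * M)) ≤
      ∑ i, w i * (X i * log (X i)) - (∑ j, w j * X j) * log (∑ j, w j * X j) := by
  set μ := ∑ j, w j * X j
  have hμM : μ ≤ M := calc
    μ ≤ ∑ j, w j * M := sum_le_sum fun j _ ↦ mul_le_mul_of_nonneg_left (hXM j) (hw0 j)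
    _ = M := by rw [← sum_mul, hw, one_mul]
  have hbound : ∀ j, (X j - μ) ^ 2 / (2 * M) ≤ bregmanMulLog μ (X j) := fun j ↦
    sq_sub_div_le_bregmanMulLog (hX0 j) hμ (hXM j) hμM
  have hM : 0 < M := hμ.trans_le hμM
  rw [← sum_mul_bregmanMulLog_mean hw]
  calc lam * ((X i - μ) ^ 2 / (2 * M)) ≤ w i * bregmanMulLog μ (X i) :=
        mul_le_mul hlam (hbound i) (by positivity) (hw0 i)
    _ ≤ ∑ j, w j * bregmanMulLog μ (X j) :=
        single_le_sum
          (fun j _ ↦ mul_nonneg (hw0 j) ((by positivity : (0 : ℝ) ≤ _).trans (hbound j)))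
          (mem_univ i)

theorem jensen_stability_concentration_general (lam δ C : ℝ)
    (hlam : 0 < lam) (hδ : 0 < δ) (hC : 0 < C) :
    ∃ η : ℝ, 0 < η ∧
      ∀ (Ω : Type) [Fintype Ω] (w : Ω → ℝ), (∀ ω, lam ≤ w ω) → (∑ ω, w ω = 1) →
        ∀ X : Ω → ℝ, (∀ ω, 0 ≤ X ω) → (∑ ω, w ω * X ω ≤ C) →
          (∑ ω, w ω * (X ω * Real.log (X ω)) <
            (∑ ω, w ω * X ω) * Real.log (∑ ω, w ω * X ω) + η) →
          ∀ ω : Ω, |X ω - ∑ ω', w ω' * X ω'| < δ := by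
  refine ⟨lam ^ 2 * δ ^ 2 / (2 * C), by positivity, ?_⟩
  intro Ω _ w hw hw1 X hX hXC hgap ω
  set μ := ∑ ω', w ω' * X ω'
  have hw0 : ∀ ω', 0 ≤ w ω' := fun ω' ↦ hlam.le.trans (hw ω')
  have hatom : ∀ ω', lam * X ω' ≤ μ := fun ω' ↦
    (mul_le_mul_of_nonneg_right (hw ω') (hX ω')).trans
      (single_le_sum (fun j _ ↦ mul_nonneg (hw0 j) (hX j)) (mem_univ ω'))
  have hμ0 : 0 ≤ μ := sum_nonneg fun j _ ↦ mul_nonneg (hw0 j) (hX j)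
  rcases hμ0.eq_or_lt with hμ_zero | hμ_pos
  · have hXω : X ω = 0 := le_antisymm (by nlinarith [hatom ω]) (hX ω)
    rwa [hXω, ← hμ_zero, sub_zero, abs_zero]
  have hXM : ∀ ω', X ω' ≤ C / lam := fun ω' ↦ by
    rw [le_div_iff₀ hlam]; linarith [hatom ω']
  have key :
      lam * ((X ω - μ) ^ 2 / (2 * (C / lam))) ≤ ∑ i, w i * (X i * log (X i)) - μ * log μ :=
    mul_sq_sub_mean_div_le_jensen_gap hw0 hw1 hX hXM hμ_pos ω (hw ω)
  have hsq : lam ^ 2 / (2 * C) * (X ω - μ) ^ 2 < lam ^ 2 / (2 * C) * δ ^ 2 := calc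
    _ = lam * ((X ω - μ) ^ 2 / (2 * (C / lam))) := by field_simp
    _ < lam ^ 2 * δ ^ 2 / (2 * C) := by linarith
    _ = _ := by ring
  exact abs_lt_of_sq_lt_sq (lt_of_mul_lt_mul_left hsq (by positivity)) hδ.le

/-- Near-equality in Jensen's inequality for x ↦ x log x on a finite probability
space with no small atoms forces X to be uniformly close to its mean. -/
theorem jensen_stability_concentration (lam δ C : ℝ)
    (hlam : 0 < lam) (hlam1 : lam < 1) (hδ : 0 < δ) (hδ1 : δ < 1) (hC : 0 < C) :
    ∃ η : ℝ, 0 < η ∧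
      ∀ (Ω : Type) [Fintype Ω] (w : Ω → ℝ), (∀ ω, lam ≤ w ω) → (∑ ω, w ω = 1) →
        ∀ X : Ω → ℝ, (∀ ω, 0 ≤ X ω) → (∑ ω, w ω * X ω ≤ C) →
          (∑ ω, w ω * (X ω * Real.log (X ω)) <
            (∑ ω, w ω * X ω) * Real.log (∑ ω, w ω * X ω) + η) →
          ∀ ω : Ω, |X ω - ∑ ω', w ω' * X ω'| < δ :=
  jensen_stability_concentration_general lam δ C hlam hδ hC
end

section
/- For any ζ > 0 there exists c = c(ζ) > 1 such that: for all n and all k₁, k₂ with ζn ≤ k₁, k₂ ≤ (1/2 − ζ)n, if A ⊆ binom([n],k₁) and B ⊆ binom([n],k₂) are cross-intersecting and μ(A) > 1 − ε for some ε ∈ (0,1), then μ(B) = O_ζ(ε^c). -/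
/-! Let `m = n - k₂`. The complements of the sets in `B` form a family of `m`-sets whose
`(m - k₁)`-fold shadow consists of `k₁`-sets disjoint from `A`. Choose `κ` with
`C(κ, m) ≤ |B| < C(κ + 1, m)`; the Lovász form of Kruskal–Katona bounds that shadow below by
`C(κ, k₁)`, so `C(κ, k₁) / C(n, k₁) < ε`. Each factor `(κ - i) / (n - i)` of this ratio is at
least `2ζ`, which gives `C(κ, k₁) / C(n, k₁) ≥ exp (-(n - κ) / 2ζ)`: `n - κ` is at least of order
`log (1/ε)`. Finally `μ(B) ≤ C(κ + 1, m) / C(n, m)`, which is `C(κ + 1, k₁) / C(n, k₁) ≤ ε / 2ζ`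
times `m - k₁ ≥ 2ζn` further factors, each at most `(κ + 1) / n`; their product is at most
`exp (-2ζ (n - κ - 1)) ≤ exp (2ζ) ε ^ (4ζ²)`. -/

open Finset Real
open scoped FinsetFamily

section ChooseRatio

variable {K : Type*} [Field K] [CharZero K]

theorem Nat.cast_choose_div_cast_choose_eq_prod (a n k : ℕ) :
    (a.choose k : K) / n.choose k = ∏ i ∈ range k, ((a : K) - i) / (n - i) := by
  rw [Nat.cast_choose_eq_descPochhammer_div, Nat.cast_choose_eq_descPochhammer_div,
    div_div_div_cancel_right₀ (by exact_mod_cast k.factorial_ne_zero),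
    descPochhammer_eval_eq_prod_range, descPochhammer_eval_eq_prod_range, prod_div_distrib]

theorem Nat.cast_choose_succ_div_cast_choose_succ (a n k : ℕ) :
    (a.choose (k + 1) : K) / n.choose (k + 1) =
      a.choose k / n.choose k * ((a - k) / (n - k)) := by
  rw [Nat.cast_choose_div_cast_choose_eq_prod, Nat.cast_choose_div_cast_choose_eq_prod,
    prod_range_succ]

end ChooseRatio

theorem Nat.cast_choose_div_cast_choose_le_mul_pow {a n k m : ℕ} (hkm : k ≤ m) (hma : m ≤ a)
    (han : a ≤ n) :
    (a.choose m : ℝ) / n.choose m ≤ (a.choose k : ℝ) / n.choose k * (a / n) ^ (m - k) := by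
  induction m, hkm using Nat.le_induction with
  | base => simp
  | succ m hkm ih =>
    have hma' : (m : ℝ) + 1 ≤ a := by exact_mod_cast hma
    have han' : (a : ℝ) ≤ n := by exact_mod_cast han
    have hfactor : ((a : ℝ) - m) / (n - m) ≤ a / n := by
      rw [div_le_div_iff₀ (by linarith) (by linarith)]
      nlinarith [m.cast_nonneg (α := ℝ)]
    rw [Nat.cast_choose_succ_div_cast_choose_succ, Nat.sub_add_comm hkm, pow_succ, ← mul_assoc]
    gcongr
    · exact div_nonneg (by linarith) (by linarith)
    · exact ih (by omega)

theorem mul_cast_choose_succ_le_cast_choose {a k : ℕ} {δ : ℝ} (hδ : 0 ≤ δ)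
    (hka : δ * (a + 1) ≤ a + 1 - k) :
    δ * (a + 1).choose k ≤ a.choose k := by
  have hk : k ≤ a + 1 := by
    have : (k : ℝ) ≤ a + 1 := by nlinarith [a.cast_nonneg (α := ℝ)]
    exact_mod_cast this
  have hrec := congrArg (Nat.cast (R := ℝ)) (Nat.choose_mul_succ_eq a k)
  push_cast [Nat.cast_sub hk] at hrec
  have hpos : (0 : ℝ) ≤ (a + 1).choose k := by positivity
  nlinarith

theorem exp_neg_div_le_self {δ x : ℝ} (hδ : 0 < δ) (hδx : δ ≤ x) (hx : x ≤ 1) :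
    exp (-(1 - x) / δ) ≤ x := by
  have hx₀ : 0 < x := hδ.trans_le hδx
  calc exp (-(1 - x) / δ) ≤ exp (-(1 - x) / x) := by
        gcongr exp ?_
        rw [neg_div, neg_div, neg_le_neg_iff]
        exact div_le_div_of_nonneg_left (by linarith) hδ hδx
    _ = exp (1 - x⁻¹) := by congr 1; field_simp; ring
    _ ≤ exp (log x) := by gcongr; exact one_sub_inv_le_log_of_pos hx₀
    _ = x := exp_log hx₀

theorem exp_neg_le_cast_choose_div_cast_choose {n k a : ℕ} {δ : ℝ} (hδ : 0 < δ)
    (hkn : 2 * k ≤ n) (han : a ≤ n) (hka : k + δ * n ≤ a) :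
    exp (-((n - a) / δ)) ≤ (a.choose k : ℝ) / n.choose k := by
  set t : ℝ := (n - a) / δ
  have hkn' : 2 * (k : ℝ) ≤ n := by exact_mod_cast hkn
  have han' : (a : ℝ) ≤ n := by exact_mod_cast han
  have ht : 0 ≤ t := div_nonneg (by linarith) hδ.le
  have hfactor : ∀ i ∈ range k, exp (-(2 / n * t)) ≤ ((a : ℝ) - i) / (n - i) := by
    intro i hi
    have hi : (i : ℝ) + 1 ≤ k := by exact_mod_cast mem_range.1 hi
    have hni : (0 : ℝ) < n - i := by linarith
    have hgap : 1 - ((a : ℝ) - i) / (n - i) = 1 / (n - i) * (n - a) := by field_simp; ring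
    refine le_trans ?_ (exp_neg_div_le_self hδ ?_ ?_)
    · rw [neg_div, hgap, mul_div_assoc]
      gcongr exp (-(?_ * _))
      rw [div_le_div_iff₀ hni (by linarith)]
      linarith
    · rw [le_div_iff₀ hni]; nlinarith [i.cast_nonneg (α := ℝ)]
    · rw [div_le_one hni]; linarith
  calc exp (-t) ≤ exp (-(2 / n * t)) ^ k := by
        rw [← exp_nat_mul]
        have : (k : ℝ) * (2 / n) ≤ 1 := by
          rw [mul_div_assoc']; exact div_le_one_of_le₀ (by linarith) n.cast_nonneg
        gcongr exp ?_
        nlinarith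
    _ ≤ _ := by
        rw [Nat.cast_choose_div_cast_choose_eq_prod]
        simpa using prod_le_prod (fun _ _ => (exp_pos _).le) hfactor

theorem cast_choose_succ_div_cast_choose_le_rpow {ζ ε : ℝ} {n k m κ : ℕ} (hζ : 0 < ζ)
    (hkn : 2 * k ≤ n) (hkm : k + 2 * ζ * n ≤ m) (hmκ : m ≤ κ) (hκn : κ < n)
    (hε : (κ.choose k : ℝ) / n.choose k < ε) :
    ((κ + 1).choose m : ℝ) / n.choose m ≤ exp (2 * ζ) / (2 * ζ) * ε ^ (1 + 4 * ζ ^ 2) := by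
  set D : ℝ := n - κ
  have hmκ' : (m : ℝ) ≤ κ := by exact_mod_cast hmκ
  have hκn' : (κ : ℝ) + 1 ≤ n := by exact_mod_cast hκn
  have hk : k ≤ m := by exact_mod_cast (by nlinarith [n.cast_nonneg (α := ℝ)] : (k : ℝ) ≤ m)
  have hshift : 2 * ζ * ((κ + 1).choose k : ℝ) ≤ κ.choose k :=
    mul_cast_choose_succ_le_cast_choose (by positivity) (by nlinarith)
  have hdecay : (((κ + 1 : ℕ) : ℝ) / n) ^ (m - k) ≤ exp (2 * ζ) * exp (-(2 * ζ) * D) := by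
    have hn : (0 : ℝ) < n := by linarith [κ.cast_nonneg (α := ℝ)]
    have hbase : ((κ + 1 : ℕ) : ℝ) / n ≤ exp (-(D - 1) / n) := by
      convert add_one_le_exp (-(D - 1) / n) using 1
      field_simp; push_cast; ring
    calc (((κ + 1 : ℕ) : ℝ) / n) ^ (m - k) ≤ exp (-(D - 1) / n) ^ (m - k) := by gcongr
      _ = exp (-(((m : ℝ) - k) / n * (D - 1))) := by
        rw [← exp_nat_mul, Nat.cast_sub hk]; ring_nf
      _ ≤ exp (-(2 * ζ * (D - 1))) := by
        gcongr
        · linarith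
        · rw [le_div_iff₀ hn]; linarith
      _ = exp (2 * ζ) * exp (-(2 * ζ) * D) := by rw [← exp_add]; ring_nf
  have hεD : exp (-(2 * ζ) * D) ≤ ε ^ (4 * ζ ^ 2) := by
    have hlow := exp_neg_le_cast_choose_div_cast_choose (by positivity : 0 < 2 * ζ) hkn hκn.le
      (by linarith)
    calc exp (-(2 * ζ) * D) = exp (-(D / (2 * ζ))) ^ (4 * ζ ^ 2) := by
          rw [← exp_mul]; congr 1; field_simp; ring
      _ ≤ ε ^ (4 * ζ ^ 2) := by gcongr; exact hlow.trans hε.le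
  have hε₀ : 0 < ε := (div_nonneg (by positivity) (by positivity)).trans_lt hε
  calc ((κ + 1).choose m : ℝ) / n.choose m
      ≤ ((κ + 1).choose k : ℝ) / n.choose k * (((κ + 1 : ℕ) : ℝ) / n) ^ (m - k) :=
        Nat.cast_choose_div_cast_choose_le_mul_pow hk (by omega) hκn
    _ ≤ ε / (2 * ζ) * (exp (2 * ζ) * ε ^ (4 * ζ ^ 2)) := by
        gcongr ?_ * ?_
        · rw [le_div_iff₀ (by positivity), div_mul_eq_mul_div, mul_comm]
          exact (div_le_div_of_nonneg_right hshift (by positivity)).trans hε.le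
        · exact hdecay.trans (by gcongr)
    _ = exp (2 * ζ) / (2 * ζ) * ε ^ (1 + 4 * ζ ^ 2) := by
        rw [rpow_add hε₀, rpow_one]; ring

theorem Nat.exists_choose_le_lt_choose_succ {m n b : ℕ} (hb : 0 < b) (hbn : b < n.choose m) :
    ∃ κ, m ≤ κ ∧ κ < n ∧ κ.choose m ≤ b ∧ b < (κ + 1).choose m := by
  have hmn : m ≤ n := by
    by_contra h
    simp [Nat.choose_eq_zero_of_lt (not_le.1 h)] at hbn
  have hm : m.choose m ≤ b := by rwa [Nat.choose_self]
  let P : ℕ → Prop := fun j => j.choose m ≤ b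
  have hκ : (Nat.findGreatest P n).choose m ≤ b := Nat.findGreatest_spec (P := P) hmn hm
  have hκn : Nat.findGreatest P n < n :=
    (Nat.findGreatest_le n).lt_of_ne fun h => by rw [h] at hκ; omega
  exact ⟨_, Nat.le_findGreatest hmn hm, hκn, hκ,
    not_le.1 (Nat.findGreatest_is_greatest (P := P) (Nat.lt_succ_self _) hκn)⟩

theorem card_add_choose_le_choose_of_cross_intersecting {n k₁ k₂ κ : ℕ}
    {A B : Finset (Finset (Fin n))} (hA : ∀ S ∈ A, #S = k₁) (hB : ∀ T ∈ B, #T = k₂)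
    (hAB : ∀ S ∈ A, ∀ T ∈ B, (S ∩ T).Nonempty) (hk : k₁ + k₂ ≤ n) (hκ : n - k₂ ≤ κ)
    (hκn : κ ≤ n) (hBκ : κ.choose (n - k₂) ≤ #B) :
    #A + κ.choose k₁ ≤ n.choose k₁ := by
  set 𝒞 := B.image compl
  have h𝒞 : (𝒞 : Set (Finset (Fin n))).Sized (n - k₂) := by
    intro S hS
    obtain ⟨T, hT, rfl⟩ := mem_image.1 hS
    rw [card_compl, Fintype.card_fin, hB T hT]
  have hKK := kruskal_katona_lovasz_form (i := n - k₂ - k₁) (by omega) hκ hκn h𝒞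
    (by rwa [card_image_of_injective _ compl_injective])
  rw [Nat.sub_sub_self (by omega)] at hKK
  have hdisj : Disjoint A (∂^[n - k₂ - k₁] 𝒞) := by
    rw [disjoint_left]
    intro S hS hS𝒞
    obtain ⟨_, hT𝒞, hST, -⟩ := mem_shadow_iterate_iff_exists_sdiff.1 hS𝒞
    obtain ⟨T, hT, rfl⟩ := mem_image.1 hT𝒞
    obtain ⟨x, hx⟩ := hAB S hS T hT
    exact mem_compl.1 (hST (mem_inter.1 hx).1) (mem_inter.1 hx).2
  have hlayer : A ∪ ∂^[n - k₂ - k₁] 𝒞 ⊆ powersetCard k₁ univ := by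
    refine union_subset (fun S hS => mem_powersetCard_univ.2 (hA S hS)) fun S hS => ?_
    rw [mem_powersetCard_univ, h𝒞.shadow_iterate hS]
    omega
  calc #A + κ.choose k₁ ≤ #(A ∪ ∂^[n - k₂ - k₁] 𝒞) := by
        rw [card_union_of_disjoint hdisj]; omega
    _ ≤ #(powersetCard k₁ (univ : Finset (Fin n))) := card_le_card hlayer
    _ = n.choose k₁ := by simp

/-- For any ζ > 0 there exists c > 1 such that for cross-intersecting families
A ⊆ binom([n],k₁), B ⊆ binom([n],k₂) with ζn ≤ k₁,k₂ ≤ (1/2−ζ)n, if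
μ(A) > 1 − ε then μ(B) = O_ζ(ε^c). -/
theorem cross_intersecting_stability (ζ : ℝ) (hζ : 0 < ζ) :
    ∃ c : ℝ, 1 < c ∧ ∃ K : ℝ, 0 < K ∧
      ∀ (n k₁ k₂ : ℕ) (A B : Finset (Finset (Fin n))) (ε : ℝ),
        ζ * n ≤ (k₁ : ℝ) → (k₁ : ℝ) ≤ (1 / 2 - ζ) * n →
        ζ * n ≤ (k₂ : ℝ) → (k₂ : ℝ) ≤ (1 / 2 - ζ) * n →
        (∀ S ∈ A, S.card = k₁) → (∀ S ∈ B, S.card = k₂) →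
        (∀ S ∈ A, ∀ T ∈ B, (S ∩ T).Nonempty) →
        0 < ε → ε < 1 →
        1 - ε < (A.card : ℝ) / (n.choose k₁) →
        (B.card : ℝ) / (n.choose k₂) ≤ K * ε ^ c := by
  refine ⟨1 + 4 * ζ ^ 2, by nlinarith, exp (2 * ζ) / (2 * ζ), by positivity, ?_⟩
  intro n k₁ k₂ A B ε _ hk₁ _ hk₂ hA hB hAB hε₀ hε₁ hμA
  rcases B.eq_empty_or_nonempty with rfl | hB₀
  · simp only [card_empty, CharP.cast_eq_zero, zero_div]
    positivity
  have hk : k₁ + k₂ ≤ n := by exact_mod_cast (by nlinarith : (k₁ : ℝ) + k₂ ≤ n)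
  have hA₀ : 0 < #A := Nat.pos_of_ne_zero fun h => by simp [h] at hμA; linarith
  have hBn : #B < n.choose (n - k₂) := by
    by_contra! h
    have := card_add_choose_le_choose_of_cross_intersecting hA hB hAB hk (by omega) le_rfl h
    omega
  obtain ⟨κ, hmκ, hκn, hκB, hBκ⟩ := Nat.exists_choose_le_lt_choose_succ hB₀.card_pos hBn
  have hε : (κ.choose k₁ : ℝ) / n.choose k₁ < ε := by
    have hN : (0 : ℝ) < n.choose k₁ := by exact_mod_cast Nat.choose_pos (by omega)
    have hKK : (#A : ℝ) + κ.choose k₁ ≤ n.choose k₁ := by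
      exact_mod_cast card_add_choose_le_choose_of_cross_intersecting hA hB hAB hk hmκ hκn.le hκB
    rw [lt_div_iff₀ hN] at hμA
    rw [div_lt_iff₀ hN]
    linarith
  calc (B.card : ℝ) / n.choose k₂ = #B / n.choose (n - k₂) := by
        rw [Nat.choose_symm (by omega)]
    _ ≤ ((κ + 1).choose (n - k₂) : ℝ) / n.choose (n - k₂) := by gcongr
    _ ≤ _ := cast_choose_succ_div_cast_choose_le_rpow hζ
          (by exact_mod_cast (by nlinarith : 2 * (k₁ : ℝ) ≤ n))
          (by rw [Nat.cast_sub (by omega)]; linarith) hmκ hκn hε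
end
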